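/- arXiv:1609.08121 — 11 statements merged into one kernel-verified Lean document; each statement's English description precedes it below -/
import Mathlib

section
/- Suppose a sequence of Feasibility Pump iterates cycles: for i = 1,…,k−1 we have vertices x̄ⁱ of a polytope P ⊆ [0,1]^n with x̃ⁱ = round(x̄ⁱ), x̄^{i+1} = argmin_{x ∈ P} ‖x̃ⁱ − x‖₁, and x̄¹ = x̄ᵏ, x̃¹ = x̃ᵏ with k ≥ 3 and x̃¹,…,x̃^{k−1} pairwise distinct. Then, assuming the tie value 1/2 is always rounded up to 1, such a cycle of length ≥ 3 cannot occur; equivalently, stalling always occurs with cycles of length two. -/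
/-!
Write `dᵢ = ‖x̃ⁱ - x̄ⁱ‖₁`. Since `x̃ⁱ⁺¹` is a nearest integer point to `x̄ⁱ⁺¹` and `x̄ⁱ⁺¹` is a
nearest point of `P` to `x̃ⁱ`, we get `dᵢ₊₁ ≤ ‖x̃ⁱ - x̄ⁱ⁺¹‖₁ ≤ dᵢ`, so along a cycle all these
inequalities are equalities. Equality in the first one makes `x̃ⁱ` and `x̃ⁱ⁺¹` coordinatewise
equidistant from `x̄ⁱ⁺¹`, and since ties are rounded up this forces `x̃ⁱ ≤ x̃ⁱ⁺¹`. A monotone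
cycle is constant, so `x̃¹ = x̃²`, which contradicts distinctness as soon as `k ≥ 3`.
-/

open Set

theorem MonotoneOn.eq_left_of_eq_of_mem_Icc {ι α : Type*} [Preorder ι] [PartialOrder α]
    {f : ι → α} {a b i : ι} (hf : MonotoneOn f (Icc a b)) (hba : f b = f a) (hi : i ∈ Icc a b) :
    f i = f a :=
  le_antisymm (hba ▸ hf hi (right_mem_Icc.2 (hi.1.trans hi.2)) hi.2)
    (hf (left_mem_Icc.2 (hi.1.trans hi.2)) hi hi.1)

theorem AntitoneOn.eq_left_of_eq_of_mem_Icc {ι α : Type*} [Preorder ι] [PartialOrder α]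
    {f : ι → α} {a b i : ι} (hf : AntitoneOn f (Icc a b)) (hba : f b = f a) (hi : i ∈ Icc a b) :
    f i = f a :=
  hf.dual_right.eq_left_of_eq_of_mem_Icc hba hi

section Round

variable {α : Type*} [Field α] [LinearOrder α] [IsStrictOrderedRing α] [FloorRing α]

theorem abs_sub_round_lt_of_round_lt {x : α} {z : ℤ} (h : round x < z) :
    |x - round x| < |x - z| := by
  have hz : (round x : α) + 1 ≤ z := by exact_mod_cast h
  have hlt := sub_half_lt_round x
  calc |x - round x| ≤ 1 / 2 := abs_sub_round x
    _ < z - x := by linarith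
    _ ≤ |x - z| := by rw [abs_sub_comm]; exact le_abs_self _

end Round

section L1Dist

variable {ι : Type*} [Fintype ι]

def l1Dist (x y : ι → ℝ) : ℝ := ∑ j, |x j - y j|

theorem l1Dist_round_le (y : ι → ℝ) (z : ι → ℤ) :
    l1Dist (fun j ↦ (round (y j) : ℝ)) y ≤ l1Dist (fun j ↦ (z j : ℝ)) y :=
  Finset.sum_le_sum fun j _ ↦ by simpa only [abs_sub_comm (y j)] using round_le (y j) (z j)

theorem le_round_of_l1Dist_eq {y : ι → ℝ} {z : ι → ℤ}
    (h : l1Dist (fun j ↦ (z j : ℝ)) y = l1Dist (fun j ↦ (round (y j) : ℝ)) y) (j : ι) :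
    z j ≤ round (y j) := by
  have hcoord : |(round (y j) : ℝ) - y j| = |(z j : ℝ) - y j| :=
    (Finset.sum_eq_sum_iff_of_le fun j _ ↦ by
      simpa only [abs_sub_comm (y j)] using round_le (y j) (z j)).1 h.symm j (Finset.mem_univ j)
  by_contra! hlt
  have hfar := abs_sub_round_lt_of_round_lt hlt
  rw [abs_sub_comm, abs_sub_comm (y j)] at hfar
  exact hfar.ne hcoord

end L1Dist

theorem no_long_cycles_general (n k : ℕ) (hk : 3 ≤ k) (P : Set (Fin n → ℝ))
    (xb xt : ℕ → Fin n → ℝ)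
    (hvert : ∀ i, 1 ≤ i → i ≤ k → xb i ∈ Set.extremePoints ℝ P)
    (hround : ∀ i, 1 ≤ i → i ≤ k → ∀ j, xt i j = ((⌊xb i j + 1/2⌋ : ℤ) : ℝ))
    (hproj : ∀ i, 1 ≤ i → i ≤ k - 1 →
      ∀ x ∈ P, ∑ j, |xt i j - xb (i+1) j| ≤ ∑ j, |xt i j - x j|)
    (hcyc1 : xb 1 = xb k) (hcyc2 : xt 1 = xt k)
    (hdistinct : ∀ i i', 1 ≤ i → i < i' → i' ≤ k - 1 → xt i ≠ xt i') :
    False := by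
  have hxt : ∀ i ∈ Icc 1 k, xt i = fun j ↦ (round (xb i j) : ℝ) := fun i hi ↦
    funext fun j ↦ by rw [hround i hi.1 hi.2 j, round_eq]
  have hstep : ∀ i, 1 ≤ i → i < k →
      l1Dist (xt (i + 1)) (xb (i + 1)) ≤ l1Dist (xt i) (xb (i + 1)) ∧
        l1Dist (xt i) (xb (i + 1)) ≤ l1Dist (xt i) (xb i) := by
    intro i hi1 hik
    refine ⟨?_, hproj i hi1 (by omega) _ (hvert i hi1 hik.le).1⟩
    rw [hxt i ⟨hi1, hik.le⟩, hxt (i + 1) ⟨by omega, hik⟩]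
    exact l1Dist_round_le _ _
  set d := fun i ↦ l1Dist (xt i) (xb i) with hd_def
  have hd : AntitoneOn d (Icc 1 k) := antitoneOn_of_add_one_le ordConnected_Icc
    fun i _ hi hi' ↦ (hstep i hi.1 hi'.2).1.trans (hstep i hi.1 hi'.2).2
  have hdk : d k = d 1 := by simp only [hd_def, hcyc1, hcyc2]
  have hxt_mono : MonotoneOn xt (Icc 1 k) := monotoneOn_of_le_add_one ordConnected_Icc
    fun i _ hi hi' ↦ by
      have hdi : d (i + 1) = d i :=
        (hd.eq_left_of_eq_of_mem_Icc hdk hi').trans (hd.eq_left_of_eq_of_mem_Icc hdk hi).symm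
      obtain ⟨hround_le, hproj_le⟩ := hstep i hi.1 hi'.2
      have htie : l1Dist (xt i) (xb (i + 1)) = l1Dist (xt (i + 1)) (xb (i + 1)) := by
        simp only [hd_def] at hdi
        linarith
      rw [hxt i hi, hxt (i + 1) hi'] at htie ⊢
      exact fun j ↦ Int.cast_le.2 (le_round_of_l1Dist_eq htie j)
  exact hdistinct 1 2 le_rfl one_lt_two (by omega)
    (hxt_mono.eq_left_of_eq_of_mem_Icc hcyc2.symm ⟨one_le_two, by omega⟩).symm

/-- With consistent rounding (ties rounded up to 1), the Feasibility Pump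
iterates cannot form a cycle of length at least 3: stalling always occurs with
cycles of length two. -/
theorem no_long_cycles (n k : ℕ) (hk : 3 ≤ k) (P : Set (Fin n → ℝ))
    (hP01 : ∀ x ∈ P, ∀ i, 0 ≤ x i ∧ x i ≤ 1)
    (xb xt : ℕ → Fin n → ℝ)
    (hvert : ∀ i, 1 ≤ i → i ≤ k → xb i ∈ Set.extremePoints ℝ P)
    (hbin : ∀ i, 1 ≤ i → i ≤ k → ∀ j, xt i j = 0 ∨ xt i j = 1)
    (hround : ∀ i, 1 ≤ i → i ≤ k → ∀ j, xt i j = ((⌊xb i j + 1/2⌋ : ℤ) : ℝ))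
    (hproj : ∀ i, 1 ≤ i → i ≤ k - 1 →
      ∀ x ∈ P, ∑ j, |xt i j - xb (i+1) j| ≤ ∑ j, |xt i j - x j|)
    (hcyc1 : xb 1 = xb k) (hcyc2 : xt 1 = xt k)
    (hdistinct : ∀ i i', 1 ≤ i → i < i' → i' ≤ k - 1 → xt i ≠ xt i') :
    False :=
  no_long_cycles_general n k hk P xb xt hvert hround hproj hcyc1 hcyc2 hdistinct
end

section
/- In the setting of a Feasibility Pump cycle where ‖x̄^{i} − x̃^{i}‖₁ = ‖x̄^{i+1} − x̃^{i}‖₁ = ‖x̄^{i+1} − x̃^{i+1}‖₁, if x̃ⁱ is the all-ones vector and J ⊆ [n] is the (nonempty) set of coordinates where x̃^{i+1} differs from x̃ⁱ (so x̃^{i+1}_j = 0 for j ∈ J), then Σ_{j∈J} x̄^{i+1}_j = |J|/2. -/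
/-!
Outside `J` the roundings `x̃ⁱ` and `x̃^{i+1}` agree, so the equality
`‖x̄^{i+1} − x̃ⁱ‖₁ = ‖x̄^{i+1} − x̃^{i+1}‖₁` only sees the coordinates in `J`. There
`x̃ⁱ_j = 1` and `x̃^{i+1}_j = 0`, so it reads `∑_{j∈J} (1 − x̄^{i+1}_j) = ∑_{j∈J} x̄^{i+1}_j`.
-/

open Finset

theorem Finset.sum_eq_sum_of_sum_univ_eq_of_eqOn_compl {ι M : Type*} [Fintype ι]
    [DecidableEq ι] [AddCancelCommMonoid M] {f g : ι → M} (s : Finset ι)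
    (hfg : ∀ j ∉ s, f j = g j) (h : ∑ j, f j = ∑ j, g j) :
    ∑ j ∈ s, f j = ∑ j ∈ s, g j := by
  have hcompl : ∑ j ∈ sᶜ, f j = ∑ j ∈ sᶜ, g j :=
    sum_congr rfl fun j hj => hfg j (mem_compl.mp hj)
  rw [← sum_add_sum_compl s f, ← sum_add_sum_compl s g, hcompl] at h
  exact add_right_cancel h

theorem Finset.sum_eq_card_div_two_of_sum_one_sub_eq {ι : Type*} (s : Finset ι) (f : ι → ℝ)
    (h : ∑ j ∈ s, (1 - f j) = ∑ j ∈ s, f j) :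
    ∑ j ∈ s, f j = (#s : ℝ) / 2 := by
  rw [sum_sub_distrib, sum_const, nsmul_one] at h
  linarith

theorem cycle_counting_identity_general (n : ℕ) (xbip1 xti xtip1 : Fin n → ℝ)
    (hbox : ∀ j, 0 ≤ xbip1 j ∧ xbip1 j ≤ 1)
    (hones : ∀ j, xti j = 1)
    (J : Finset (Fin n))
    (hJ : J = Finset.univ.filter (fun j => xtip1 j ≠ xti j))
    (hJzero : ∀ j ∈ J, xtip1 j = 0)
    (heq2 : ∑ j, |xbip1 j - xti j| = ∑ j, |xbip1 j - xtip1 j|) :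
    ∑ j ∈ J, xbip1 j = (J.card : ℝ) / 2 := by
  have hagree : ∀ j ∉ J, |xbip1 j - xti j| = |xbip1 j - xtip1 j| := by
    intro j hj
    rw [hJ, mem_filter, not_and_not_right] at hj
    rw [hj (mem_univ j)]
  have hdist_one : ∀ j ∈ J, |xbip1 j - xti j| = 1 - xbip1 j := fun j _ => by
    rw [hones j, abs_sub_comm, abs_of_nonneg (sub_nonneg.mpr (hbox j).2)]
  have hdist_zero : ∀ j ∈ J, |xbip1 j - xtip1 j| = xbip1 j := fun j hj => by
    rw [hJzero j hj, sub_zero, abs_of_nonneg (hbox j).1]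
  have hJsum := J.sum_eq_sum_of_sum_univ_eq_of_eqOn_compl hagree heq2
  rw [sum_congr rfl hdist_one, sum_congr rfl hdist_zero] at hJsum
  exact J.sum_eq_card_div_two_of_sum_one_sub_eq xbip1 hJsum

/-- Key counting identity in the proof that long cycles cannot occur: along a
cycle with `x̃ⁱ` the all-ones vector, the coordinates of `x̄^{i+1}` in the set
`J` of flipped coordinates sum to `|J|/2`. -/
theorem cycle_counting_identity (n : ℕ) (xbi xbip1 xti xtip1 : Fin n → ℝ)
    (hbox : ∀ j, 0 ≤ xbip1 j ∧ xbip1 j ≤ 1)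
    (hones : ∀ j, xti j = 1)
    (hbin : ∀ j, xtip1 j = 0 ∨ xtip1 j = 1)
    (hround : ∀ j, xtip1 j = ((⌊xbip1 j + 1/2⌋ : ℤ) : ℝ))
    (J : Finset (Fin n))
    (hJ : J = Finset.univ.filter (fun j => xtip1 j ≠ xti j))
    (hJzero : ∀ j ∈ J, xtip1 j = 0)
    (hJne : J.Nonempty)
    (heq1 : ∑ j, |xbi j - xti j| = ∑ j, |xbip1 j - xti j|)
    (heq2 : ∑ j, |xbip1 j - xti j| = ∑ j, |xbip1 j - xtip1 j|) :
    ∑ j ∈ J, xbip1 j = (J.card : ℝ) / 2 :=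
  cycle_counting_identity_general n xbip1 xti xtip1 hbox hones J hJ hJzero heq2
end

section
/- Let P = {(x,y) ∈ [0,1]^n × ℝ^d : Ax + By ≤ b} and suppose x̄ ∈ {0,1}^n is not in the projection of P onto the x-variables, and a projected certificate exists. Then there exists λ ∈ ℝ^m with λ ≥ 0, λB = 0, λA x̄ > λb, and the support of λ has size at most d+1. -/
/-!
Write `c = A x̄ - b`. A projected certificate is a nonnegative `λ` with
`∑ λ_r (c_r, B_r) = (s, 0)` for some `s > 0`, i.e. it exhibits `(s, 0)` in the cone generated by
the `m` vectors `(c_r, B_r) ∈ ℝ × ℝ^d`. By Carathéodory's theorem for cones, `(s, 0)` is already a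
nonnegative combination of linearly independent generators, hence of at most `d + 1` of them:
as long as the generators in the support are dependent, moving along a dependence by the step
given by the ratio test preserves the combination and nonnegativity and kills one multiplier.
-/

open Finset Matrix

section ConicCaratheodory

variable {𝕜 M ι : Type*} [Field 𝕜] [LinearOrder 𝕜] [IsStrictOrderedRing 𝕜]
  [AddCommGroup M] [Module 𝕜 M] [Fintype ι]

theorem exists_nonneg_sub_smul_support_ssubset (l μ : ι → 𝕜) (hl : 0 ≤ l)
    (hμ : ∀ i, μ i ≠ 0 → l i ≠ 0) (hpos : ∃ i, 0 < μ i) :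
    ∃ t : 𝕜, 0 ≤ l - t • μ ∧ univ.filter (fun i => (l - t • μ) i ≠ 0) ⊂ univ.filter (l · ≠ 0) := by
  obtain ⟨i₀, hi₀⟩ := hpos
  obtain ⟨j, hj, hmin⟩ := exists_min_image ({i | 0 < μ i} : Finset ι) (fun i => l i / μ i)
    ⟨i₀, by simpa using hi₀⟩
  simp only [mem_filter, mem_univ, true_and] at hj hmin
  have ht : 0 ≤ l j / μ j := div_nonneg (hl j) hj.le
  refine ⟨l j / μ j, fun i => ?_, ?_⟩
  · rw [Pi.zero_apply, Pi.sub_apply, Pi.smul_apply, smul_eq_mul, sub_nonneg]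
    rcases le_or_gt (μ i) 0 with hi | hi
    · exact (mul_nonpos_of_nonneg_of_nonpos ht hi).trans (hl i)
    · exact (le_div_iff₀ hi).1 (hmin i hi)
  · refine (ssubset_iff_of_subset fun i => ?_).2 ⟨j, ?_, ?_⟩
    · simp only [mem_filter, mem_univ, true_and]
      contrapose!
      intro hli
      have : μ i = 0 := by_contra fun h => hμ i h hli
      simp [hli, this]
    · simpa using hμ j hj.ne'
    · simp [div_mul_cancel₀ _ hj.ne']

theorem exists_pos_sum_smul_eq_zero_of_not_linearIndepOn {v : ι → M} {s : Finset ι}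
    (h : ¬LinearIndepOn 𝕜 v s) :
    ∃ μ : ι → 𝕜, ∑ i, μ i • v i = 0 ∧ (∀ i, μ i ≠ 0 → i ∈ s) ∧ ∃ i, 0 < μ i := by
  classical
  obtain ⟨g, hg, i, his, hgi⟩ := not_linearIndepOn_finset_iff.1 h
  have hsum : ∑ i, (if i ∈ s then g i else 0) • v i = 0 := by
    simpa [ite_smul, sum_ite_mem] using hg
  have hsupp : ∀ j, (if j ∈ s then g j else 0) ≠ 0 → j ∈ s := fun j => by
    split_ifs with hj <;> simp [hj]
  rcases hgi.lt_or_gt with hneg | hpos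
  · refine ⟨fun j => -if j ∈ s then g j else 0, ?_, fun j hj => hsupp j (neg_ne_zero.1 hj), i, ?_⟩
    · simp only [neg_smul, sum_neg_distrib, hsum, neg_zero]
    · simpa [his] using hneg
  · exact ⟨_, hsum, hsupp, i, by simpa [his] using hpos⟩

theorem exists_nonneg_sum_smul_eq_linearIndepOn (v : ι → M) (l : ι → 𝕜) (hl : 0 ≤ l) :
    ∃ l' : ι → 𝕜, 0 ≤ l' ∧ ∑ i, l' i • v i = ∑ i, l i • v i ∧
      LinearIndepOn 𝕜 v ↑(univ.filter (l' · ≠ 0)) := by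
  induction hk : #(univ.filter (l · ≠ 0)) using Nat.strong_induction_on generalizing l with
  | _ k ih =>
  by_cases hli : LinearIndepOn 𝕜 v ↑(univ.filter (l · ≠ 0))
  · exact ⟨l, hl, rfl, hli⟩
  obtain ⟨μ, hμv, hμl, hpos⟩ := exists_pos_sum_smul_eq_zero_of_not_linearIndepOn hli
  obtain ⟨t, ht, hlt⟩ := exists_nonneg_sub_smul_support_ssubset l μ hl
    (fun i hi => by simpa using hμl i hi) hpos
  obtain ⟨l', hl', hsum, hl'v⟩ := ih _ (hk ▸ card_lt_card hlt) (l - t • μ) ht rfl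
  refine ⟨l', hl', ?_, hl'v⟩
  simp only [hsum, Pi.sub_apply, Pi.smul_apply, sub_smul, sum_sub_distrib, smul_assoc,
    ← smul_sum, hμv, smul_zero, sub_zero]

theorem exists_nonneg_sum_smul_eq_card_support_le_finrank [FiniteDimensional 𝕜 M]
    (v : ι → M) (l : ι → 𝕜) (hl : 0 ≤ l) :
    ∃ l' : ι → 𝕜, 0 ≤ l' ∧ ∑ i, l' i • v i = ∑ i, l i • v i ∧
      #(univ.filter (l' · ≠ 0)) ≤ Module.finrank 𝕜 M := by
  obtain ⟨l', hl', hsum, hind⟩ := exists_nonneg_sum_smul_eq_linearIndepOn v l hl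
  exact ⟨l', hl', hsum, by simpa using hind.fintype_card_le_finrank⟩

end ConicCaratheodory

theorem Matrix.sum_smul_prodMk {R m n : Type*} [CommSemiring R] [Fintype m]
    (l c : m → R) (B : Matrix m n R) :
    ∑ r, l r • (c r, B r) = (l ⬝ᵥ c, l ᵥ* B) := by
  ext <;> simp [Prod.fst_sum, Prod.snd_sum, dotProduct, vecMul_eq_sum]

theorem small_support_certificate_general (m n d : ℕ)
    (A : Matrix (Fin m) (Fin n) ℝ) (B : Matrix (Fin m) (Fin d) ℝ)
    (b : Fin m → ℝ)
    (xb : Fin n → ℝ)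
    (hcert : ∃ l : Fin m → ℝ, (∀ r, 0 ≤ l r) ∧ Matrix.vecMul l B = 0 ∧
      dotProduct l b < dotProduct l (A.mulVec xb)) :
    ∃ l : Fin m → ℝ, (∀ r, 0 ≤ l r) ∧ Matrix.vecMul l B = 0 ∧
      dotProduct l b < dotProduct l (A.mulVec xb) ∧
      (Finset.univ.filter (fun r => l r ≠ 0)).card ≤ d + 1 := by
  obtain ⟨l, hl, hlB, hlc⟩ := hcert
  set c := A *ᵥ xb - b
  have hcert_iff (l : Fin m → ℝ) : l ⬝ᵥ b < l ⬝ᵥ (A *ᵥ xb) ↔ 0 < l ⬝ᵥ c := by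
    rw [dotProduct_sub, sub_pos]
  obtain ⟨l', hl', hsum, hcard⟩ :=
    exists_nonneg_sum_smul_eq_card_support_le_finrank (fun r => (c r, B r)) l hl
  simp only [sum_smul_prodMk, Prod.mk.injEq] at hsum
  refine ⟨l', hl', hsum.2.trans hlB, (hcert_iff l').2 (hsum.1 ▸ (hcert_iff l).1 hlc), ?_⟩
  simpa [Module.finrank_prod, add_comm] using hcard

/-- If `x̄ ∈ {0,1}^n` is not in the projection of
`P = {(x,y) ∈ [0,1]^n × ℝ^d : Ax + By ≤ b}` onto the binary variables and a
projected certificate exists, then there exists a (minimal) projected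
certificate whose multiplier vector has support of size at most `d+1`. -/
theorem small_support_certificate (m n d : ℕ)
    (A : Matrix (Fin m) (Fin n) ℝ) (B : Matrix (Fin m) (Fin d) ℝ)
    (b : Fin m → ℝ)
    (xb : Fin n → ℝ) (hxb : ∀ i, xb i = 0 ∨ xb i = 1)
    (hnotproj : ¬ ∃ y : Fin d → ℝ, ∀ r, (A.mulVec xb + B.mulVec y) r ≤ b r)
    (hcert : ∃ l : Fin m → ℝ, (∀ r, 0 ≤ l r) ∧ Matrix.vecMul l B = 0 ∧
      dotProduct l b < dotProduct l (A.mulVec xb)) :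
    ∃ l : Fin m → ℝ, (∀ r, 0 ≤ l r) ∧ Matrix.vecMul l B = 0 ∧
      dotProduct l b < dotProduct l (A.mulVec xb) ∧
      (Finset.univ.filter (fun r => l r ≠ 0)).card ≤ d + 1 :=
  small_support_certificate_general m n d A B b xb hcert
end

section
/- Let λ* be an extreme point (basic feasible solution) of the polyhedron {λ ∈ ℝ^m : λ ≥ 0, B^Tλ = 0, e^Tλ = 1} that maximizes λAx̄ − λb, and assume the optimal value is positive. Then there is no projected certificate λ̃ (i.e., λ̃ ≥ 0, λ̃ ≠ 0, λ̃B = 0, λ̃Ax̄ > λ̃b) whose support is strictly contained in the support of λ*. -/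
/-!
Normalising a certificate `λ̃` to coordinate sum one puts it in `S`, with support inside
`supp λ*`. A point `y` of `{l ≥ 0 : f l = c}` (`f` linear) whose support lies in that of `x` can be
pushed past `x` to `x + ε (x - y)` without leaving the set, so `x` lies strictly between two of its
points; if `x` is extreme this forces `y = x`, and then the two supports coincide.
-/

open Filter Topology

section ExtremePoints

variable {ι M : Type*} [Fintype ι] [AddCommGroup M] [Module ℝ M]

lemma exists_pos_nonneg_add_smul_sub {x y : ι → ℝ} (hx : 0 ≤ x)
    (hsupp : Function.support y ⊆ Function.support x) :
    ∃ ε : ℝ, 0 < ε ∧ 0 ≤ x + ε • (x - y) := by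
  have hev : ∀ i, ∀ᶠ ε in 𝓝[>] (0 : ℝ), 0 ≤ x i + ε * (x i - y i) := by
    intro i
    rcases (hx i).lt_or_eq with hxi | hxi
    · have hlim : Tendsto (fun ε : ℝ => x i + ε * (x i - y i)) (𝓝 0) (𝓝 (x i)) := by
        simpa using (by fun_prop : Continuous fun ε : ℝ => x i + ε * (x i - y i)).tendsto 0
      exact nhdsWithin_le_nhds ((hlim.eventually_const_lt hxi).mono fun _ h => h.le)
    · have hyi : y i = 0 := Function.notMem_support.mp fun h => hsupp h hxi.symm
      exact Eventually.of_forall fun ε => by simp [← hxi, hyi]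
  obtain ⟨ε, hε, hεpos⟩ := ((eventually_all.mpr hev).and self_mem_nhdsWithin).exists
  exact ⟨ε, hεpos, fun i => hε i⟩

theorem eq_of_mem_extremePoints_of_support_subset (f : (ι → ℝ) →ₗ[ℝ] M) (c : M)
    {x y : ι → ℝ} (hx : x ∈ Set.extremePoints ℝ {l | 0 ≤ l ∧ f l = c})
    (hy : y ∈ {l | 0 ≤ l ∧ f l = c}) (hsupp : Function.support y ⊆ Function.support x) :
    y = x := by
  obtain ⟨⟨hx_nonneg, hfx⟩, hx_extreme⟩ := mem_extremePoints.mp hx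
  obtain ⟨ε, hε, hw_nonneg⟩ := exists_pos_nonneg_add_smul_sub hx_nonneg hsupp
  have hw : x + ε • (x - y) ∈ {l | 0 ≤ l ∧ f l = c} :=
    ⟨hw_nonneg, by simp [map_sub, hfx, hy.2]⟩
  have hseg : x ∈ openSegment ℝ y (x + ε • (x - y)) := by
    refine ⟨ε / (1 + ε), 1 / (1 + ε), by positivity, by positivity, by field_simp; ring, ?_⟩
    match_scalars <;> field_simp
    ring
  exact (hx_extreme y hy _ hw hseg).1

end ExtremePoints

theorem extreme_point_certificate_minimal_general (m n d : ℕ)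
    (A : Matrix (Fin m) (Fin n) ℝ) (B : Matrix (Fin m) (Fin d) ℝ)
    (b : Fin m → ℝ) (xb : Fin n → ℝ)
    (S : Set (Fin m → ℝ))
    (hS : S = {l | (∀ i, 0 ≤ l i) ∧ Matrix.vecMul l B = 0 ∧ ∑ i, l i = 1})
    (ls : Fin m → ℝ) (hext : ls ∈ Set.extremePoints ℝ S) :
    ¬ ∃ lt : Fin m → ℝ, (∀ i, 0 ≤ lt i) ∧ lt ≠ 0 ∧ Matrix.vecMul lt B = 0 ∧
      dotProduct lt b < dotProduct lt (A.mulVec xb) ∧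
      {i | lt i ≠ 0} ⊂ {i | ls i ≠ 0} := by
  rintro ⟨lt, hlt_nonneg, hlt_ne, hltB, -, hsub⟩
  let f : (Fin m → ℝ) →ₗ[ℝ] (Fin d → ℝ) × ℝ :=
    (Matrix.vecMulLinear B).prod (∑ i, LinearMap.proj i)
  have hS' : S = {l | 0 ≤ l ∧ f l = (0, 1)} := by
    ext l
    simp [hS, f, Pi.le_def]
  have hsum : 0 < ∑ i, lt i :=
    Fintype.sum_pos (lt_of_le_of_ne (fun i => hlt_nonneg i) (Ne.symm hlt_ne))
  have hnormalized : (∑ i, lt i)⁻¹ • lt ∈ {l | 0 ≤ l ∧ f l = (0, 1)} := by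
    refine ⟨fun i => mul_nonneg (inv_nonneg.mpr hsum.le) (hlt_nonneg i), ?_⟩
    simp [f, hltB, hsum.ne']
  have hsupp : Function.support ((∑ i, lt i)⁻¹ • lt) = Function.support lt :=
    Function.support_const_smul_of_ne_zero _ _ (inv_ne_zero hsum.ne')
  rw [hS'] at hext
  have heq := eq_of_mem_extremePoints_of_support_subset f (0, 1) hext hnormalized
    (hsupp ▸ hsub.subset)
  exact hsub.ne (by rw [← heq]; exact hsupp.symm)

/-- An extreme point `λ*` of `{λ ≥ 0 : Bᵀλ = 0, eᵀλ = 1}` maximizing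
`λAx̄ − λb` (with positive optimal value) yields a minimal projected
certificate: no projected certificate has support strictly contained in
`supp(λ*)`. -/
theorem extreme_point_certificate_minimal (m n d : ℕ)
    (A : Matrix (Fin m) (Fin n) ℝ) (B : Matrix (Fin m) (Fin d) ℝ)
    (b : Fin m → ℝ) (xb : Fin n → ℝ)
    (S : Set (Fin m → ℝ))
    (hS : S = {l | (∀ i, 0 ≤ l i) ∧ Matrix.vecMul l B = 0 ∧ ∑ i, l i = 1})
    (ls : Fin m → ℝ) (hext : ls ∈ Set.extremePoints ℝ S)
    (hmax : ∀ l ∈ S,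
      dotProduct l (A.mulVec xb) - dotProduct l b ≤
        dotProduct ls (A.mulVec xb) - dotProduct ls b)
    (hpos : 0 < dotProduct ls (A.mulVec xb) - dotProduct ls b) :
    ¬ ∃ lt : Fin m → ℝ, (∀ i, 0 ≤ lt i) ∧ lt ≠ 0 ∧ Matrix.vecMul lt B = 0 ∧
      dotProduct lt b < dotProduct lt (A.mulVec xb) ∧
      {i | lt i ≠ 0} ⊂ {i | ls i ≠ 0} :=
  extreme_point_certificate_minimal_general m n d A B b xb S hS ls hext
end

section
/- Let P = {x ∈ [0,1]^n : a·x = b} be a nonempty subset-sum polytope (a ∈ ℝ^n, each aᵢ > 0), and let x̃ ∈ {0,1}^n be a stalling point (AltProj(x̃) = x̃) with a·x̃ < b. Let x̄ be a vertex of P minimizing ‖x̃ − x‖₁. Then there exists a coordinate k with x̃_k = 0 such that x̄ᵢ = x̃ᵢ for all i ≠ k and x̄_k ∈ (0, 1/2). -/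
lemma not_two_frac (n : ℕ) (a : Fin n → ℝ) (b : ℝ) (ha : ∀ i, 0 < a i)
    (xb : Fin n → ℝ)
    (hxbv : xb ∈ Set.extremePoints ℝ {x : Fin n → ℝ | (∀ i, 0 ≤ x i ∧ x i ≤ 1) ∧ ∑ i, a i * x i = b})
    (i j : Fin n) (hij : i ≠ j) (hi0 : 0 < xb i) (hi1 : xb i < 1)
    (hj0 : 0 < xb j) (hj1 : xb j < 1) : False := by
  obtain ⟨⟨hbd, hsum⟩, hext⟩ := hxbv
  set ε : ℝ := min (min (xb i) (1 - xb i) / a j) (min (xb j) (1 - xb j) / a i) with hε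
  have hε0 : 0 < ε :=
    lt_min (div_pos (lt_min hi0 (by linarith)) (ha j))
      (div_pos (lt_min hj0 (by linarith)) (ha i))
  have hεj : ε * a j ≤ min (xb i) (1 - xb i) := by
    have h := min_le_left (min (xb i) (1 - xb i) / a j) (min (xb j) (1 - xb j) / a i)
    rw [← hε] at h
    calc ε * a j ≤ (min (xb i) (1 - xb i) / a j) * a j :=
          mul_le_mul_of_nonneg_right h (le_of_lt (ha j))
      _ = min (xb i) (1 - xb i) := div_mul_cancel₀ _ (ne_of_gt (ha j))
  have hεi : ε * a i ≤ min (xb j) (1 - xb j) := by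
    have h := min_le_right (min (xb i) (1 - xb i) / a j) (min (xb j) (1 - xb j) / a i)
    rw [← hε] at h
    calc ε * a i ≤ (min (xb j) (1 - xb j) / a i) * a i :=
          mul_le_mul_of_nonneg_right h (le_of_lt (ha i))
      _ = min (xb j) (1 - xb j) := div_mul_cancel₀ _ (ne_of_gt (ha i))
  have hεj1 : ε * a j ≤ xb i := le_trans hεj (min_le_left _ _)
  have hεj2 : ε * a j ≤ 1 - xb i := le_trans hεj (min_le_right _ _)
  have hεi1 : ε * a i ≤ xb j := le_trans hεi (min_le_left _ _)
  have hεi2 : ε * a i ≤ 1 - xb j := le_trans hεi (min_le_right _ _)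
  have hpj : 0 < ε * a j := mul_pos hε0 (ha j)
  have hpi : 0 < ε * a i := mul_pos hε0 (ha i)
  set d : Fin n → ℝ := fun i' => if i' = i then a j else if i' = j then -(a i) else 0 with hd
  have hdsum : ∑ i', a i' * d i' = 0 := by
    have h1 : ∀ i', a i' * d i' =
        (if i' = i then a i * a j else 0) + (if i' = j then -(a j * a i) else 0) := by
      intro i'
      rcases eq_or_ne i' i with h | h
      · subst h; simp [hd, hij]
      · rcases eq_or_ne i' j with h' | h'
        · subst h'; simp [hd, h]
        · simp [hd, h, h']
    rw [Finset.sum_congr rfl (fun i' _ => h1 i'), Finset.sum_add_distrib]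
    simp [Finset.sum_ite_eq']
    ring
  have hmem : ∀ s : ℝ, s = 1 ∨ s = -1 →
      (fun i' => xb i' + s * (ε * d i')) ∈
        {x : Fin n → ℝ | (∀ i, 0 ≤ x i ∧ x i ≤ 1) ∧ ∑ i, a i * x i = b} := by
    intro s hs
    constructor
    · intro i'
      by_cases h : i' = i
      · subst h
        rcases hs with h | h <;> subst h <;> simp [hd, hij] <;> constructor <;> linarith
      · by_cases h' : i' = j
        · subst h'
          rcases hs with h2 | h2 <;> subst h2 <;> simp [hd, h] <;> constructor <;> linarith
        · simp [hd, h, h']; exact hbd i'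
    · have heq : ∑ i', a i' * (xb i' + s * (ε * d i')) =
          ∑ i', a i' * xb i' + (s * ε) * ∑ i', a i' * d i' := by
        rw [Finset.mul_sum, ← Finset.sum_add_distrib]
        exact Finset.sum_congr rfl fun i' _ => by ring
      rw [heq, hdsum, hsum]; ring
  have hy1 := hmem 1 (Or.inl rfl)
  have hy2 := hmem (-1) (Or.inr rfl)
  have hseg : xb ∈ openSegment ℝ (fun i' => xb i' + 1 * (ε * d i'))
      (fun i' => xb i' + (-1) * (ε * d i')) := by
    refine ⟨1/2, 1/2, by norm_num, by norm_num, by norm_num, ?_⟩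
    funext i'
    simp [Pi.smul_apply, smul_eq_mul]
    ring
  have hcon := hext hy1 hy2 hseg
  have h2 := congrFun hcon i
  simp [hd] at h2
  rcases h2 with h2 | h2
  · exact absurd h2 (ne_of_gt hε0)
  · exact absurd h2 (ne_of_gt (ha j))

/-- Claim 1 (first part): for a stalling point `x̃` of a subset-sum polytope
with `a·x̃ < b`, the ℓ1 projection `x̄` agrees with `x̃` except in one
coordinate `k ∉ supp(x̃)`, where `x̄_k ∈ (0, 1/2)`. -/
theorem stalling_below (n : ℕ) (a : Fin n → ℝ) (b : ℝ) (ha : ∀ i, 0 < a i)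
    (P : Set (Fin n → ℝ))
    (hP : P = {x | (∀ i, 0 ≤ x i ∧ x i ≤ 1) ∧ ∑ i, a i * x i = b})
    (hne : P.Nonempty)
    (xt : Fin n → ℝ) (hxt : ∀ i, xt i = 0 ∨ xt i = 1)
    (hlt : ∑ i, a i * xt i < b)
    (xb : Fin n → ℝ) (hxbv : xb ∈ Set.extremePoints ℝ P)
    (hmin : ∀ x ∈ P, ∑ i, |xt i - xb i| ≤ ∑ i, |xt i - x i|)
    (hstall : ∀ i, ((⌊xb i + 1/2⌋ : ℤ) : ℝ) = xt i) :
    ∃ k, xt k = 0 ∧ (∀ i, i ≠ k → xb i = xt i) ∧ 0 < xb k ∧ xb k < 1/2 := by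
  subst hP
  have hxbP := hxbv.1
  obtain ⟨hbd, hsum⟩ := hxbP
  -- integral coordinates of xb agree with xt
  have hint : ∀ i, xb i = 0 ∨ xb i = 1 → xb i = xt i := by
    intro i hi
    have := hstall i
    rcases hi with h | h <;> rw [h] at this <;> rw [← this, h] <;> norm_num
  -- there is a coordinate where xb ≠ xt
  have hdiff : ∃ k, xb k ≠ xt k := by
    by_contra hc
    push_neg at hc
    have : ∑ i, a i * xt i = b := by
      rw [← hsum]; exact Finset.sum_congr rfl fun i _ => by rw [hc i]
    linarith
  obtain ⟨k, hk⟩ := hdiff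
  -- xb k is fractional
  have hkfrac : 0 < xb k ∧ xb k < 1 := by
    rcases (hbd k).1.lt_or_eq with h0 | h0
    · rcases (hbd k).2.lt_or_eq with h1 | h1
      · exact ⟨h0, h1⟩
      · exact absurd (hint k (Or.inr h1)) hk
    · exact absurd (hint k (Or.inl h0.symm)) hk
  -- every other coordinate is integral, hence agrees with xt
  have hoth : ∀ i, i ≠ k → xb i = xt i := by
    intro i hik
    apply hint
    by_contra hc
    push_neg at hc
    have hi0 : 0 < xb i := lt_of_le_of_ne (hbd i).1 (Ne.symm hc.1)
    have hi1 : xb i < 1 := lt_of_le_of_ne (hbd i).2 hc.2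
    exact not_two_frac n a b ha xb hxbv i k hik hi0 hi1 hkfrac.1 hkfrac.2
  -- a·xb = a·xt - a k * xt k + a k * xb k
  have hsum2 : ∑ i, a i * xb i = ∑ i, a i * xt i - a k * xt k + a k * xb k := by
    have : ∑ i, a i * xb i - ∑ i, a i * xt i = ∑ i, (a i * xb i - a i * xt i) := by
      rw [Finset.sum_sub_distrib]
    have h2 : ∑ i, (a i * xb i - a i * xt i) = a k * xb k - a k * xt k := by
      rw [Finset.sum_eq_single k]
      · intro i _ hik; rw [hoth i hik]; ring
      · intro h; exact absurd (Finset.mem_univ k) h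
    linarith
  have hgt : a k * xt k < a k * xb k := by
    rw [hsum2] at hsum; linarith
  have hxk : xt k = 0 := by
    rcases hxt k with h | h
    · exact h
    · exfalso
      rw [h, mul_one] at hgt
      nlinarith [hkfrac.2, ha k]
  have hhalf : xb k < 1/2 := by
    have := hstall k
    rw [hxk] at this
    have hfl : ⌊xb k + 1/2⌋ = 0 := by exact_mod_cast this
    have h2 := (Int.floor_eq_iff.mp hfl).2
    push_cast at h2
    linarith
  exact ⟨k, hxk, hoth, hkfrac.1, hhalf⟩
end

section
/- Let P = {x ∈ [0,1]^n : a·x = b} be a nonempty subset-sum polytope and let x̃ ∈ {0,1}^n be a stalling point (AltProj(x̃) = x̃) with a·x̃ > b. Then there exists a coordinate k with x̃_k = 1 such that the ℓ1 projection x̄ = ℓ1-proj(P, x̃) satisfies x̄ᵢ = x̃ᵢ for all i ≠ k and x̄_k ∈ [1/2, 1). -/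
/-!
A vertex of `{x ∈ [0,1]^ι : a ⬝ᵥ x = b}` has at most one fractional coordinate: if `x i` and
`x j` were both fractional, `x` would be the midpoint of `x ± t • (a j • eᵢ - a i • eⱼ)`, which lie
in the polytope for small `t > 0`. At a stalling point `round x̄ = x̃`, so every coordinate where
`x̄` and `x̃` differ is fractional; hence they differ in exactly one coordinate `k` (and in at least
one, since `a ⬝ᵥ x̄ = b < a ⬝ᵥ x̃`). Then `a ⬝ᵥ x̄ < a ⬝ᵥ x̃` forces `x̄ k < x̃ k = 1`, and
`round (x̄ k) = 1` gives `1/2 ≤ x̄ k`.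
-/

open Set Filter Topology Matrix

def subsetSumPolytope {ι : Type*} [Fintype ι] (a : ι → ℝ) (b : ℝ) : Set (ι → ℝ) :=
  {x | (∀ i, x i ∈ Icc 0 1) ∧ a ⬝ᵥ x = b}

lemma exists_pos_forall_add_sub_smul_mem_Icc {ι : Type*} [Finite ι] {x d : ι → ℝ}
    (hx : ∀ i, x i ∈ Icc 0 1) (hd : ∀ i, d i ≠ 0 → x i ∈ Ioo 0 1) :
    ∃ t > (0 : ℝ), ∀ i, (x + t • d) i ∈ Icc 0 1 ∧ (x - t • d) i ∈ Icc 0 1 := by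
  have hnear : ∀ i, ∀ᶠ t in 𝓝 (0 : ℝ), (x + t • d) i ∈ Icc 0 1 ∧ (x - t • d) i ∈ Icc 0 1 := by
    intro i
    by_cases hdi : d i = 0
    · simp [hdi, hx i]
    have hIoo : ∀ s : ℝ, ∀ᶠ t in 𝓝 (0 : ℝ), x i + s * t * d i ∈ Ioo 0 1 := fun s =>
      (Continuous.tendsto' (by fun_prop) 0 (x i) (by simp)).eventually
        (isOpen_Ioo.mem_nhds (hd i hdi))
    filter_upwards [hIoo 1, hIoo (-1)] with t h₁ h₂
    simp only [Pi.add_apply, Pi.sub_apply, Pi.smul_apply, smul_eq_mul]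
    constructor
    · exact Ioo_subset_Icc_self (by simpa using h₁)
    · exact Ioo_subset_Icc_self (by convert h₂ using 2; ring)
  obtain ⟨t, hmem, ht⟩ := ((eventually_all.2 hnear).filter_mono nhdsWithin_le_nhds |>.and
    (self_mem_nhdsWithin : Ioi (0 : ℝ) ∈ 𝓝[>] 0)).exists
  exact ⟨t, ht, hmem⟩

lemma eq_of_mem_Ioo_of_mem_extremePoints_subsetSumPolytope {ι : Type*} [Fintype ι]
    {a : ι → ℝ} {b : ℝ} (ha : ∀ i, a i ≠ 0) {x : ι → ℝ}
    (hx : x ∈ (subsetSumPolytope a b).extremePoints ℝ) {i j : ι}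
    (hi : x i ∈ Ioo 0 1) (hj : x j ∈ Ioo 0 1) : i = j := by
  classical
  by_contra hij
  obtain ⟨⟨hbox, hsum⟩, hext⟩ := mem_extremePoints.1 hx
  set d : ι → ℝ := Pi.single i (a j) - Pi.single j (a i)
  have hd : ∀ l, d l ≠ 0 → x l ∈ Ioo 0 1 := by
    intro l hl
    by_cases hli : l = i
    · exact hli ▸ hi
    by_cases hlj : l = j
    · exact hlj ▸ hj
    simp [d, hli, hlj] at hl
  have had : a ⬝ᵥ d = 0 := by simp [d, dotProduct_sub, dotProduct_single, mul_comm]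
  obtain ⟨t, ht, hmem⟩ := exists_pos_forall_add_sub_smul_mem_Icc hbox hd
  have hplus : x + t • d ∈ subsetSumPolytope a b :=
    ⟨fun l => (hmem l).1, by simp [dotProduct_add, dotProduct_smul, had, hsum]⟩
  have hminus : x - t • d ∈ subsetSumPolytope a b :=
    ⟨fun l => (hmem l).2, by simp [dotProduct_sub, dotProduct_smul, had, hsum]⟩
  have htd : t • d = 0 := by
    simpa using (hext _ hplus _ hminus (mem_openSegment_add_sub x (t • d))).1
  have := congrFun htd i
  simp [d, hij, ht.ne', ha j] at this

lemma mem_Ioo_of_ne_round {y : ℝ} (hy : y ∈ Icc 0 1) (h : y ≠ round y) : y ∈ Ioo 0 1 := by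
  rcases hy.1.eq_or_lt with rfl | h₀
  · simp at h
  rcases hy.2.eq_or_lt with rfl | h₁
  · simp at h
  exact ⟨h₀, h₁⟩

theorem stalling_above_general (n : ℕ) (a : Fin n → ℝ) (b : ℝ) (ha : ∀ i, 0 < a i)
    (P : Set (Fin n → ℝ))
    (hP : P = {x | (∀ i, 0 ≤ x i ∧ x i ≤ 1) ∧ ∑ i, a i * x i = b})
    (xt : Fin n → ℝ) (hxt : ∀ i, xt i = 0 ∨ xt i = 1)
    (hgt : b < ∑ i, a i * xt i)
    (xb : Fin n → ℝ) (hxbv : xb ∈ Set.extremePoints ℝ P)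
    (hstall : ∀ i, ((⌊xb i + 1/2⌋ : ℤ) : ℝ) = xt i) :
    ∃ k, xt k = 1 ∧ (∀ i, i ≠ k → xb i = xt i) ∧ 1/2 ≤ xb k ∧ xb k < 1 := by
  subst hP
  change xb ∈ (subsetSumPolytope a b).extremePoints ℝ at hxbv
  change b < a ⬝ᵥ xt at hgt
  obtain ⟨hbox, hsum⟩ := hxbv.1
  simp only [← round_eq] at hstall
  have hfrac : ∀ i, xb i ≠ xt i → xb i ∈ Ioo 0 1 := fun i hi =>
    mem_Ioo_of_ne_round (hbox i) (hstall i ▸ hi)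
  obtain ⟨k, hk⟩ : ∃ k, xb k ≠ xt k := by
    by_contra! h
    rw [← funext h, hsum] at hgt
    exact hgt.false
  have hagree : ∀ i, i ≠ k → xb i = xt i := fun i hik => by_contra fun hi =>
    hik (eq_of_mem_Ioo_of_mem_extremePoints_subsetSumPolytope (fun i => (ha i).ne') hxbv
      (hfrac i hi) (hfrac k hk))
  have hdiff : xb - xt = Pi.single k (xb k - xt k) := by
    ext i
    by_cases hik : i = k
    · subst hik; simp
    · simp [hik, hagree i hik]
  have hlt : xb k < xt k := by
    have : a k * (xb k - xt k) < 0 := by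
      rw [← dotProduct_single, ← hdiff, dotProduct_sub]; linarith
    exact sub_neg.1 (neg_of_mul_neg_right this (ha k).le)
  have hxtk : xt k = 1 := (hxt k).resolve_left fun h₀ => by linarith [(hbox k).1]
  have hhalf : 1/2 ≤ xb k := by
    have := abs_sub_round (xb k)
    rw [hstall k, hxtk, abs_le] at this
    linarith
  exact ⟨k, hxtk, hagree, hhalf, hxtk ▸ hlt⟩

/-- Claim 1 (second part): for a stalling point `x̃` of a subset-sum polytope
with `a·x̃ > b`, the ℓ1 projection `x̄` agrees with `x̃` except in one
coordinate `k ∈ supp(x̃)`, where `x̄_k ∈ [1/2, 1)`. -/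
theorem stalling_above (n : ℕ) (a : Fin n → ℝ) (b : ℝ) (ha : ∀ i, 0 < a i)
    (P : Set (Fin n → ℝ))
    (hP : P = {x | (∀ i, 0 ≤ x i ∧ x i ≤ 1) ∧ ∑ i, a i * x i = b})
    (hne : P.Nonempty)
    (xt : Fin n → ℝ) (hxt : ∀ i, xt i = 0 ∨ xt i = 1)
    (hgt : b < ∑ i, a i * xt i)
    (xb : Fin n → ℝ) (hxbv : xb ∈ Set.extremePoints ℝ P)
    (hmin : ∀ x ∈ P, ∑ i, |xt i - xb i| ≤ ∑ i, |xt i - x i|)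
    (hstall : ∀ i, ((⌊xb i + 1/2⌋ : ℤ) : ℝ) = xt i) :
    ∃ k, xt k = 1 ∧ (∀ i, i ≠ k → xb i = xt i) ∧ 1/2 ≤ xb k ∧ xb k < 1 :=
  stalling_above_general n a b ha P hP xt hxt hgt xb hxbv hstall
end

section
/- Let P = {x ∈ [0,1]^n : a·x = b} and x̃ ∈ {0,1}^n. If the minimum ℓ1 distance min_{x ∈ P} ‖x̃ − x‖₁ is strictly less than 1, then AltProj(x̃) differs from x̃ in at most one coordinate, i.e., ‖AltProj(x̃) − x̃‖₀ ≤ 1. -/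
open Finset

/-! A coordinate of `x̄` that does not round to the integer `x̃ᵢ` lies at distance at least `1/2`
from it, so two such coordinates would already force `‖x̃ - x̄‖₁ ≥ 1`. -/

theorem Int.floor_add_half_eq_of_abs_sub_lt {α : Type*} [Field α] [LinearOrder α]
    [IsStrictOrderedRing α] [FloorRing α] {y : α} {t : ℤ} (h : |(t : α) - y| < 1 / 2) :
    ⌊y + 1 / 2⌋ = t := by
  obtain ⟨hlo, hhi⟩ := abs_sub_lt_iff.mp h
  rw [Int.floor_eq_iff]
  constructor <;> linarith

theorem Int.half_le_abs_sub_of_floor_add_half_ne {α : Type*} [Field α] [LinearOrder α]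
    [IsStrictOrderedRing α] [FloorRing α] {y : α} {t : ℤ} (h : ⌊y + 1 / 2⌋ ≠ t) :
    1 / 2 ≤ |(t : α) - y| :=
  le_of_not_gt fun hlt => h (Int.floor_add_half_eq_of_abs_sub_lt hlt)

theorem Finset.card_le_one_of_sum_lt_two_mul {ι α : Type*} [Fintype ι] [Field α] [LinearOrder α]
    [IsStrictOrderedRing α] {f : ι → α} {c : α} (s : Finset ι) (hf : ∀ i, 0 ≤ f i)
    (hs : ∀ i ∈ s, c ≤ f i) (hsum : ∑ i, f i < 2 * c) : #s ≤ 1 := by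
  have hc : 0 < c := by linarith [Finset.sum_nonneg fun i (_ : i ∈ univ) => hf i]
  have hcard : (#s : α) * c < 2 * c :=
    calc (#s : α) * c = #s • c := (nsmul_eq_mul _ _).symm
      _ ≤ ∑ i ∈ s, f i := Finset.card_nsmul_le_sum s f c hs
      _ ≤ ∑ i, f i := Finset.sum_le_univ_sum_of_nonneg hf
      _ < 2 * c := hsum
  have : #s < 2 := by exact_mod_cast lt_of_mul_lt_mul_right hcard hc.le
  omega

theorem altproj_changes_at_most_one_general (n : ℕ)
    (xt : Fin n → ℝ) (hxt : ∀ i, xt i = 0 ∨ xt i = 1)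
    (xb : Fin n → ℝ)
    (hval : ∑ i, |xt i - xb i| < 1) :
    (Finset.univ.filter (fun i => ((⌊xb i + 1/2⌋ : ℤ) : ℝ) ≠ xt i)).card ≤ 1 := by
  have hint : ∀ i, ∃ k : ℤ, xt i = k := fun i => by
    rcases hxt i with h | h
    · exact ⟨0, by simp [h]⟩
    · exact ⟨1, by simp [h]⟩
  have hfar : ∀ i ∈ univ.filter (fun i => ((⌊xb i + 1/2⌋ : ℤ) : ℝ) ≠ xt i),
      1 / 2 ≤ |xt i - xb i| := by
    intro i hi
    obtain ⟨k, hk⟩ := hint i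
    rw [mem_filter, hk] at hi
    rw [hk]
    exact Int.half_le_abs_sub_of_floor_add_half_ne fun h => hi.2 (by rw [h])
  exact card_le_one_of_sum_lt_two_mul _ (fun i => abs_nonneg _) hfar (by linarith)

/-- Claim 2, part 2: if the minimum ℓ1 distance from a 0/1 point `x̃` to the
subset-sum polytope is strictly less than 1, then `AltProj(x̃)` differs from
`x̃` in at most one coordinate. -/
theorem altproj_changes_at_most_one (n : ℕ) (a : Fin n → ℝ) (b : ℝ)
    (P : Set (Fin n → ℝ))
    (hP : P = {x | (∀ i, 0 ≤ x i ∧ x i ≤ 1) ∧ ∑ i, a i * x i = b})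
    (xt : Fin n → ℝ) (hxt : ∀ i, xt i = 0 ∨ xt i = 1)
    (xb : Fin n → ℝ) (hxbP : xb ∈ P)
    (hmin : ∀ x ∈ P, ∑ i, |xt i - xb i| ≤ ∑ i, |xt i - x i|)
    (hval : ∑ i, |xt i - xb i| < 1) :
    (Finset.univ.filter (fun i => ((⌊xb i + 1/2⌋ : ℤ) : ℝ) ≠ xt i)).card ≤ 1 :=
  altproj_changes_at_most_one_general n xt hxt xb hval
end

section
/- For a subset-sum polytope P = {x ∈ [0,1]^n : a·x = b} with all aᵢ > 0, the alternating projection-rounding map is idempotent: for every x̃ ∈ {0,1}^n, AltProj(AltProj(x̃)) = AltProj(x̃). -/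
/-- An extreme point of the subset-sum polytope cannot have two fractional
coordinates. -/
lemma extreme_two_frac {n : ℕ} {a : Fin n → ℝ} {b : ℝ} (ha : ∀ i, 0 < a i)
    {x : Fin n → ℝ}
    (hx : x ∈ Set.extremePoints ℝ
      {x : Fin n → ℝ | (∀ i, 0 ≤ x i ∧ x i ≤ 1) ∧ ∑ i, a i * x i = b})
    {i j : Fin n} (hij : i ≠ j) (hi0 : 0 < x i) (hi1 : x i < 1)
    (hj0 : 0 < x j) (hj1 : x j < 1) : False := by
  obtain ⟨hxP, hext⟩ := hx
  obtain ⟨hxb, hxs⟩ := hxP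
  set ε : ℝ := min (min (x i) (1 - x i) / a j) (min (x j) (1 - x j) / a i) with hεdef
  have hεpos : 0 < ε := by
    apply lt_min
    · exact div_pos (lt_min hi0 (by linarith)) (ha j)
    · exact div_pos (lt_min hj0 (by linarith)) (ha i)
  have hεi : ε * a j ≤ min (x i) (1 - x i) := by
    have h1 : ε ≤ min (x i) (1 - x i) / a j := min_le_left _ _
    calc ε * a j ≤ (min (x i) (1 - x i) / a j) * a j :=
          mul_le_mul_of_nonneg_right h1 (ha j).le
      _ = min (x i) (1 - x i) := div_mul_cancel₀ _ (ha j).ne'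
  have hεj : ε * a i ≤ min (x j) (1 - x j) := by
    have h1 : ε ≤ min (x j) (1 - x j) / a i := min_le_right _ _
    calc ε * a i ≤ (min (x j) (1 - x j) / a i) * a i :=
          mul_le_mul_of_nonneg_right h1 (ha i).le
      _ = min (x j) (1 - x j) := div_mul_cancel₀ _ (ha i).ne'
  set d : Fin n → ℝ := fun k => (if k = i then a j else 0) - (if k = j then a i else 0)
    with hd
  have hsumd : ∑ k, a k * d k = 0 := by
    have : ∀ k, a k * d k = (if k = i then a k * a j else 0) -
        (if k = j then a k * a i else 0) := by
      intro k
      simp [hd, mul_sub, mul_ite]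
    rw [Finset.sum_congr rfl (fun k _ => this k), Finset.sum_sub_distrib]
    simp [Finset.sum_ite_eq']
    ring
  have hbnd : ∀ k, |ε * d k| ≤ min (x k) (1 - x k) := by
    intro k
    by_cases hk : k = i
    · subst hk
      have : d k = a j := by simp [hd, hij]
      rw [this, abs_of_nonneg (mul_nonneg hεpos.le (ha j).le)]
      exact hεi
    · by_cases hk' : k = j
      · subst hk'
        have : d k = -(a i) := by simp [hd, hk]
        rw [this, mul_neg, abs_neg, abs_of_nonneg (mul_nonneg hεpos.le (ha i).le)]
        exact hεj
      · have : d k = 0 := by simp [hd, hk, hk']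
        simp [this]
        constructor
        · exact (hxb k).1
        · linarith [(hxb k).2]
  set x₁ : Fin n → ℝ := fun k => x k + ε * d k with hx₁
  set x₂ : Fin n → ℝ := fun k => x k - ε * d k with hx₂
  have hmem₁ : x₁ ∈ {x : Fin n → ℝ | (∀ i, 0 ≤ x i ∧ x i ≤ 1) ∧ ∑ i, a i * x i = b} := by
    constructor
    · intro k
      have h1 := hbnd k
      have h2 := abs_le.mp h1
      have h3 : min (x k) (1 - x k) ≤ x k := min_le_left _ _
      have h4 : min (x k) (1 - x k) ≤ 1 - x k := min_le_right _ _
      constructor <;> simp [hx₁] <;> linarith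
    · simp only [hx₁]
      have : ∑ k, a k * (x k + ε * d k) = ∑ k, a k * x k + ε * ∑ k, a k * d k := by
        rw [Finset.mul_sum, ← Finset.sum_add_distrib]
        apply Finset.sum_congr rfl
        intro k _
        ring
      rw [this, hsumd, hxs]
      ring
  have hmem₂ : x₂ ∈ {x : Fin n → ℝ | (∀ i, 0 ≤ x i ∧ x i ≤ 1) ∧ ∑ i, a i * x i = b} := by
    constructor
    · intro k
      have h1 := hbnd k
      have h2 := abs_le.mp h1
      have h3 : min (x k) (1 - x k) ≤ x k := min_le_left _ _
      have h4 : min (x k) (1 - x k) ≤ 1 - x k := min_le_right _ _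
      constructor <;> simp [hx₂] <;> linarith
    · simp only [hx₂]
      have : ∑ k, a k * (x k - ε * d k) = ∑ k, a k * x k - ε * ∑ k, a k * d k := by
        rw [Finset.mul_sum, ← Finset.sum_sub_distrib]
        apply Finset.sum_congr rfl
        intro k _
        ring
      rw [this, hsumd, hxs]
      ring
  have hseg : x ∈ openSegment ℝ x₁ x₂ := by
    refine ⟨1/2, 1/2, by norm_num, by norm_num, by norm_num, ?_⟩
    funext k
    simp [hx₁, hx₂, Pi.smul_apply, smul_eq_mul]
    ring
  have := hext hmem₁ hmem₂ hseg
  have hcontra : x₁ i = x i := by rw [this]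
  have : d i = a j := by simp [hd, hij]
  simp [hx₁, this] at hcontra
  rcases hcontra with h | h
  · exact absurd h hεpos.ne'
  · exact absurd h (ha j).ne'

/-- For a subset-sum polytope with positive coefficients, the alternating
projection-rounding map `AltProj` is idempotent:
`AltProj(AltProj(x̃)) = AltProj(x̃)` for every 0/1 point `x̃`. -/
theorem altproj_idempotent (n : ℕ) (a : Fin n → ℝ) (b : ℝ) (ha : ∀ i, 0 < a i)
    (P : Set (Fin n → ℝ))
    (hP : P = {x | (∀ i, 0 ≤ x i ∧ x i ≤ 1) ∧ ∑ i, a i * x i = b})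
    (hne : P.Nonempty)
    (xt : Fin n → ℝ) (hxt : ∀ i, xt i = 0 ∨ xt i = 1)
    (xb1 : Fin n → ℝ) (h1v : xb1 ∈ Set.extremePoints ℝ P)
    (h1min : ∀ x ∈ P, ∑ i, |xt i - xb1 i| ≤ ∑ i, |xt i - x i|)
    (z : Fin n → ℝ) (hz : ∀ i, z i = ((⌊xb1 i + 1/2⌋ : ℤ) : ℝ))
    (xb2 : Fin n → ℝ) (h2v : xb2 ∈ Set.extremePoints ℝ P)
    (h2min : ∀ x ∈ P, ∑ i, |z i - xb2 i| ≤ ∑ i, |z i - x i|) :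
    ∀ i, ((⌊xb2 i + 1/2⌋ : ℤ) : ℝ) = z i := by
  subst hP
  have hxb1P := h1v.1
  have hxb2P := h2v.1
  obtain ⟨hxb1b, hxb1s⟩ := hxb1P
  obtain ⟨hxb2b, hxb2s⟩ := hxb2P
  -- basic rounding facts
  have hzle : ∀ i, z i ≤ xb1 i + 1/2 := by
    intro i; rw [hz i]; exact Int.floor_le _
  have hzgt : ∀ i, xb1 i - 1/2 < z i := by
    intro i; rw [hz i]
    have := Int.lt_floor_add_one (xb1 i + 1/2)
    linarith
  have hzint : ∀ i, xb1 i = 0 ∨ xb1 i = 1 → z i = xb1 i := by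
    intro i hi
    rw [hz i]
    rcases hi with h | h <;> rw [h] <;> norm_num
  -- dichotomy: all integral, or exactly one fractional coordinate
  have hdich : (∀ k, xb1 k = 0 ∨ xb1 k = 1) ∨
      ∃ i0, (0 < xb1 i0 ∧ xb1 i0 < 1) ∧ ∀ k, k ≠ i0 → xb1 k = 0 ∨ xb1 k = 1 := by
    by_cases h : ∀ k, xb1 k = 0 ∨ xb1 k = 1
    · exact Or.inl h
    · right
      push_neg at h
      obtain ⟨i0, hi0⟩ := h
      refine ⟨i0, ⟨lt_of_le_of_ne (hxb1b i0).1 (Ne.symm hi0.1),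
        lt_of_le_of_ne (hxb1b i0).2 hi0.2⟩, ?_⟩
      intro k hk
      by_contra hkf
      push_neg at hkf
      exact extreme_two_frac ha h1v hk
        (lt_of_le_of_ne (hxb1b k).1 (Ne.symm hkf.1))
        (lt_of_le_of_ne (hxb1b k).2 hkf.2)
        (lt_of_le_of_ne (hxb1b i0).1 (Ne.symm hi0.1))
        (lt_of_le_of_ne (hxb1b i0).2 hi0.2)
  -- S1 bound
  have hS1 : ∑ i, |z i - xb1 i| ≤ 1/2 := by
    rcases hdich with h | ⟨i0, hfr, hint⟩
    · have : ∑ i, |z i - xb1 i| = 0 := by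
        apply Finset.sum_eq_zero
        intro k _
        rw [hzint k (h k)]
        simp
      rw [this]; norm_num
    · rw [Finset.sum_eq_single_of_mem i0 (Finset.mem_univ _)
        (fun k _ hk => by rw [hzint k (hint k hk)]; simp)]
      rw [abs_le]
      constructor
      · linarith [hzgt i0]
      · linarith [hzle i0]
  have hS2 : ∑ i, |z i - xb2 i| ≤ 1/2 :=
    le_trans (h2min xb1 ⟨hxb1b, hxb1s⟩) hS1
  have hterm : ∀ i, |z i - xb2 i| ≤ 1/2 := by
    intro i
    calc |z i - xb2 i| ≤ ∑ k, |z k - xb2 k| :=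
          Finset.single_le_sum (f := fun k => |z k - xb2 k|)
            (fun k _ => abs_nonneg _) (Finset.mem_univ i)
      _ ≤ 1/2 := hS2
  -- the strict upper bound: xb2 j ≠ z j + 1/2
  have hstrict : ∀ j, xb2 j < z j + 1/2 := by
    intro j
    rcases lt_or_eq_of_le (by linarith [abs_le.mp (hterm j)] :
        xb2 j ≤ z j + 1/2) with h | heq
    · exact h
    · exfalso
      -- edge case: xb2 j = z j + 1/2
      have htj : |z j - xb2 j| = 1/2 := by rw [heq]; rw [abs_sub_comm]; simp
      have hS2eq : ∑ i, |z i - xb2 i| = 1/2 := by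
        have h' : |z j - xb2 j| ≤ ∑ k, |z k - xb2 k| :=
          Finset.single_le_sum (f := fun k => |z k - xb2 k|)
            (fun k _ => abs_nonneg _) (Finset.mem_univ j)
        rw [htj] at h'
        linarith
      have hS1eq : ∑ i, |z i - xb1 i| = 1/2 := by
        have := h2min xb1 ⟨hxb1b, hxb1s⟩
        rw [hS2eq] at this
        linarith
      -- all other coordinates of xb2 equal z
      have hother : ∀ k, k ≠ j → xb2 k = z k := by
        intro k hk
        have hsplit : |z j - xb2 j| + ∑ i ∈ Finset.univ.erase j, |z i - xb2 i|
            = ∑ i, |z i - xb2 i| :=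
          Finset.add_sum_erase Finset.univ (fun k => |z k - xb2 k|) (Finset.mem_univ j)
        rw [hS2eq, htj] at hsplit
        have hzero : ∑ i ∈ Finset.univ.erase j, |z i - xb2 i| = 0 := by linarith
        have := (Finset.sum_eq_zero_iff_of_nonneg
          (fun i _ => abs_nonneg (z i - xb2 i))).mp hzero k
          (Finset.mem_erase.mpr ⟨hk, Finset.mem_univ k⟩)
        have := abs_eq_zero.mp this
        linarith
      -- xb1 has exactly one fractional coordinate i0, with xb1 i0 = z i0 - 1/2
      rcases hdich with h | ⟨i0, hfr, hint⟩
      · have : ∑ i, |z i - xb1 i| = 0 := by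
          apply Finset.sum_eq_zero
          intro k _
          rw [hzint k (h k)]; simp
        rw [this] at hS1eq; norm_num at hS1eq
      · have hSi0 : |z i0 - xb1 i0| = 1/2 := by
          rw [← hS1eq]
          rw [Finset.sum_eq_single_of_mem i0 (Finset.mem_univ _)
            (fun k _ hk => by rw [hzint k (hint k hk)]; simp)]
        have hxb1i0 : xb1 i0 = z i0 - 1/2 := by
          rcases abs_eq (by norm_num : (0:ℝ) ≤ 1/2) |>.mp hSi0 with h | h
          · linarith
          · exfalso; linarith [hzgt i0]
        -- strict inequality of constraint sums
        have hlt : ∑ k, a k * xb1 k < ∑ k, a k * xb2 k := by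
          apply Finset.sum_lt_sum
          · intro k _
            apply mul_le_mul_of_nonneg_left _ (ha k).le
            by_cases hk : k = j
            · subst hk
              by_cases hk' : k = i0
              · subst hk'; linarith [hxb1i0, heq]
              · linarith [hzint k (hint k hk'), heq]
            · have ho := hother k hk
              by_cases hk' : k = i0
              · subst hk'; linarith [hxb1i0]
              · linarith [hzint k (hint k hk')]
          · refine ⟨j, Finset.mem_univ j, ?_⟩
            apply mul_lt_mul_of_pos_left _ (ha j)
            by_cases hk' : j = i0
            · subst hk'; linarith [hxb1i0, heq]
            · linarith [hzint j (hint j hk'), heq]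
        rw [hxb1s, hxb2s] at hlt
        exact lt_irrefl b hlt
  -- conclude
  intro i
  rw [hz i]
  norm_cast
  rw [Int.floor_eq_iff]
  constructor
  · have := abs_le.mp (hterm i)
    rw [hz i] at this
    push_cast
    linarith [this.2]
  · have := hstrict i
    rw [hz i] at this
    push_cast
    linarith
end

section
/- Let P = {x ∈ [0,1]^n : a·x = b} be a feasible subset-sum polytope with all aᵢ > 0, let x* ∈ {0,1}^n be a feasible 0/1 solution (a·x* = b), and let x̃ ∈ {0,1}^n satisfy a·x̃ ≠ b and the fixed-point condition AltProj(x̃) = x̃. Then there exists a set I ⊆ [n] with |I| ≤ 2 such that x' = AltProj*(flip(x̃, I)) satisfies ‖x' − x*‖₀ ≤ ‖x̃ − x*‖₀ − 1. -/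
open Finset

private lemma sum_shift {n : ℕ} (F G : Fin n → ℝ) (s : Finset (Fin n))
    (h : ∀ i ∉ s, F i = G i) :
    ∑ i, F i = ∑ i, G i + ∑ i ∈ s, (F i - G i) := by
  have h1 : ∑ i ∈ s, (F i - G i) = ∑ i : Fin n, (F i - G i) :=
    Finset.sum_subset s.subset_univ (fun i _ hi => by rw [h i hi, sub_self])
  rw [h1, Finset.sum_sub_distrib]; ring

private lemma frac_unique {n : ℕ} {a : Fin n → ℝ} {b : ℝ} (ha : ∀ i, 0 < a i)
    {x : Fin n → ℝ}
    (hx : x ∈ Set.extremePoints ℝ {x : Fin n → ℝ | (∀ i, 0 ≤ x i ∧ x i ≤ 1) ∧ ∑ i, a i * x i = b})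
    {i j : Fin n} (hi0 : x i ≠ 0) (hi1 : x i ≠ 1) (hj0 : x j ≠ 0) (hj1 : x j ≠ 1) :
    i = j := by
  by_contra hij
  obtain ⟨⟨hx01, hxsum⟩, hext⟩ := hx
  set m : ℝ := min (min (x i) (1 - x i)) (min (x j) (1 - x j)) with hm
  have hmi : 0 < m := by
    have h1 := (hx01 i).1; have h2 := (hx01 i).2
    have h3 := (hx01 j).1; have h4 := (hx01 j).2
    refine lt_min (lt_min ?_ ?_) (lt_min ?_ ?_)
    · exact lt_of_le_of_ne h1 (Ne.symm hi0)
    · have := lt_of_le_of_ne h2 hi1; linarith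
    · exact lt_of_le_of_ne h3 (Ne.symm hj0)
    · have := lt_of_le_of_ne h4 hj1; linarith
  have hab : 0 < a i + a j := by have := ha i; have := ha j; linarith
  set t : ℝ := m / (a i + a j) with htdef
  have ht : 0 < t := div_pos hmi hab
  set u : Fin n → ℝ := fun k => if k = i then a j * t else if k = j then -(a i * t) else 0 with hu
  have hajt : a j * t ≤ m := by
    have h1 : a j * t = m * (a j / (a i + a j)) := by rw [htdef]; ring
    have h2 : a j / (a i + a j) ≤ 1 := by
      rw [div_le_one hab]; have := ha i; linarith
    calc a j * t = m * (a j / (a i + a j)) := h1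
      _ ≤ m * 1 := mul_le_mul_of_nonneg_left h2 hmi.le
      _ = m := mul_one m
  have hait : a i * t ≤ m := by
    have h1 : a i * t = m * (a i / (a i + a j)) := by rw [htdef]; ring
    have h2 : a i / (a i + a j) ≤ 1 := by
      rw [div_le_one hab]; have := ha j; linarith
    calc a i * t = m * (a i / (a i + a j)) := h1
      _ ≤ m * 1 := mul_le_mul_of_nonneg_left h2 hmi.le
      _ = m := mul_one m
  have hm1 : m ≤ x i := le_trans (min_le_left _ _) (min_le_left _ _)
  have hm2 : m ≤ 1 - x i := le_trans (min_le_left _ _) (min_le_right _ _)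
  have hm3 : m ≤ x j := le_trans (min_le_right _ _) (min_le_left _ _)
  have hm4 : m ≤ 1 - x j := le_trans (min_le_right _ _) (min_le_right _ _)
  have husum : ∑ k, a k * u k = 0 := by
    have hsub : ∑ k, a k * u k = ∑ k ∈ ({i, j} : Finset (Fin n)), a k * u k := by
      refine (Finset.sum_subset (Finset.subset_univ _) ?_).symm
      intro k _ hk
      simp only [mem_insert, mem_singleton] at hk
      push_neg at hk
      simp [hu, hk.1, hk.2]
    rw [hsub, Finset.sum_pair hij]
    simp [hu, hij, Ne.symm hij]
    ring
  have hmem : ∀ σ : ℝ, σ = 1 ∨ σ = -1 →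
      (fun k => x k + σ * u k) ∈ {x : Fin n → ℝ | (∀ i, 0 ≤ x i ∧ x i ≤ 1) ∧ ∑ i, a i * x i = b} := by
    intro σ hσ
    constructor
    · intro k
      by_cases hki : k = i
      · have huk : u k = a j * t := by simp only [hu]; rw [if_pos hki]
        dsimp only; rw [huk, hki]
        rcases hσ with rfl | rfl <;> constructor <;>
          linarith [hm1, hm2, hajt, mul_pos (ha j) ht, (hx01 i).1, (hx01 i).2]
      · by_cases hkj : k = j
        · have huk : u k = -(a i * t) := by simp only [hu]; rw [if_neg hki, if_pos hkj]
          dsimp only; rw [huk, hkj]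
          rcases hσ with rfl | rfl <;> constructor <;>
            linarith [hm3, hm4, hait, mul_pos (ha i) ht, (hx01 j).1, (hx01 j).2]
        · have huk : u k = 0 := by simp only [hu]; rw [if_neg hki, if_neg hkj]
          dsimp only; rw [huk]
          rcases hσ with rfl | rfl <;> constructor <;>
            linarith [(hx01 k).1, (hx01 k).2]
    · have : ∑ k, a k * (x k + σ * u k) = ∑ k, a k * x k + σ * ∑ k, a k * u k := by
        rw [Finset.mul_sum, ← Finset.sum_add_distrib]
        exact Finset.sum_congr rfl fun k _ => by ring
      rw [this, husum, hxsum]; ring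
  have h1 := hmem 1 (Or.inl rfl)
  have h2 := hmem (-1) (Or.inr rfl)
  have hseg : x ∈ openSegment ℝ (fun k => x k + 1 * u k) (fun k => x k + (-1) * u k) := by
    refine ⟨1/2, 1/2, by norm_num, by norm_num, by norm_num, ?_⟩
    funext k
    simp only [Pi.add_apply, Pi.smul_apply, smul_eq_mul]
    ring
  have heq := hext h1 h2 hseg
  have : x i + 1 * u i = x i := congrFun heq i
  have hui : u i = 0 := by linarith
  have : u i = a j * t := by simp [hu]
  rw [this] at hui
  have : 0 < a j * t := mul_pos (ha j) ht
  linarith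

private lemma endgame {n : ℕ} {a : Fin n → ℝ} {b : ℝ} (ha : ∀ i, 0 < a i)
    {xs : Fin n → ℝ} (hxs : ∀ i, xs i = 0 ∨ xs i = 1)
    {xt : Fin n → ℝ} (hxt : ∀ i, xt i = 0 ∨ xt i = 1)
    (I : Finset (Fin n)) (hIne : I.Nonempty) (hIc : I.card ≤ 2)
    (hIdiff : ∀ i ∈ I, xt i ≠ xs i)
    (y : Fin n → ℝ) (hy01 : ∀ i, 0 ≤ y i ∧ y i ≤ 1)
    (hyfeas : ∑ i, a i * y i = b)
    (ht : ∑ i, |(if i ∈ I then 1 - xt i else xt i) - y i| < (I.card : ℝ) / 2) :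
    ∀ xb' : Fin n → ℝ,
      xb' ∈ Set.extremePoints ℝ {x : Fin n → ℝ | (∀ i, 0 ≤ x i ∧ x i ≤ 1) ∧ ∑ i, a i * x i = b} →
      (∀ x ∈ {x : Fin n → ℝ | (∀ i, 0 ≤ x i ∧ x i ≤ 1) ∧ ∑ i, a i * x i = b},
        ∑ i, |(if i ∈ I then 1 - xt i else xt i) - xb' i| ≤
          ∑ i, |(if i ∈ I then 1 - xt i else xt i) - x i|) →
      (Finset.univ.filter (fun i => ((⌊xb' i + 1/2⌋ : ℤ) : ℝ) ≠ xs i)).card ≤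
        (Finset.univ.filter (fun i => xt i ≠ xs i)).card - 1 := by
  intro xb' hext hmin
  set z : Fin n → ℝ := fun i => if i ∈ I then 1 - xt i else xt i with hz
  have hz01 : ∀ i, z i = 0 ∨ z i = 1 := fun i => by
    by_cases hiI : i ∈ I <;> rcases hxt i with h | h <;> simp [hz, hiI, h]
  have hyP : y ∈ {x : Fin n → ℝ | (∀ i, 0 ≤ x i ∧ x i ≤ 1) ∧ ∑ i, a i * x i = b} := ⟨hy01, hyfeas⟩
  have hu : ∑ i, |z i - xb' i| ≤ ∑ i, |z i - y i| := hmin y hyP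
  have hb01 : ∀ i, 0 ≤ xb' i ∧ xb' i ≤ 1 := hext.1.1
  have hterm : ∀ i, |z i - xb' i| ≤ ∑ k, |z k - y k| := fun i =>
    le_trans (Finset.single_le_sum (f := fun k => |z k - xb' k|)
      (fun k _ => abs_nonneg _) (Finset.mem_univ i)) hu
  have hIcge : 1 ≤ I.card := hIne.card_pos
  have htlt1 : ∑ i, |z i - y i| < 1 := by
    have : (I.card : ℝ) ≤ 2 := by exact_mod_cast hIc
    linarith [ht]
  set B := Finset.univ.filter (fun i => ((⌊xb' i + 1/2⌋ : ℤ) : ℝ) ≠ z i) with hB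
  -- integer rounding fact
  have hri : ∀ v : ℝ, v = 0 ∨ v = 1 → ((⌊v + 1/2⌋ : ℤ) : ℝ) = v := by
    rintro v (rfl | rfl) <;> norm_num
  have hbadfrac : ∀ i ∈ B, xb' i ≠ 0 ∧ xb' i ≠ 1 := by
    intro i hi
    rw [hB, Finset.mem_filter] at hi
    have hbad := hi.2
    have hti := hterm i
    constructor
    · intro h
      rw [h, hri 0 (Or.inl rfl)] at hbad
      rcases hz01 i with hzi | hzi
      · exact hbad hzi.symm
      · rw [hzi, h] at hti
        norm_num at hti
        linarith
    · intro h
      rw [h, hri 1 (Or.inr rfl)] at hbad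
      rcases hz01 i with hzi | hzi
      · rw [hzi, h] at hti
        norm_num at hti
        linarith
      · exact hbad hzi.symm
  have hBsub : ∀ i ∈ B, ∀ j ∈ B, i = j := fun i hi j hj =>
    frac_unique ha hext (hbadfrac i hi).1 (hbadfrac i hi).2 (hbadfrac j hj).1 (hbadfrac j hj).2
  have hBcard : B.card ≤ 1 := Finset.card_le_one.mpr hBsub
  have hhalf : ∀ i ∈ B, 1/2 ≤ |z i - xb' i| := by
    intro i hi
    rw [hB, Finset.mem_filter] at hi
    have hbad := hi.2
    have h0 := (hb01 i).1
    have h1 := (hb01 i).2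
    rcases hz01 i with hzi | hzi <;> rw [hzi] at hbad ⊢
    · -- z i = 0, round ≠ 0 ⇒ xb' i ≥ 1/2
      by_contra hc
      push_neg at hc
      rw [abs_sub_lt_iff] at hc
      have : ⌊xb' i + 1/2⌋ = 0 := by
        rw [Int.floor_eq_zero_iff]
        simp only [Set.mem_Ico]
        constructor <;> linarith [hc.2]
      exact hbad (by rw [this]; norm_num)
    · -- z i = 1, round ≠ 1 ⇒ xb' i < 1/2
      by_contra hc
      push_neg at hc
      rw [abs_sub_lt_iff] at hc
      have : ⌊xb' i + 1/2⌋ = 1 := by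
        have h2 : (1:ℝ) ≤ xb' i + 1/2 := by linarith [hc.1]
        have h3 : xb' i + 1/2 < 2 := by linarith
        rw [Int.floor_eq_iff]
        constructor <;> push_cast <;> linarith
      exact hbad (by rw [this]; norm_num)
  have hBempty : I.card = 1 → B = ∅ := by
    intro h1
    rw [Finset.eq_empty_iff_forall_notMem]
    intro i hi
    have := hhalf i hi
    have := hterm i
    rw [h1] at ht
    norm_num at ht
    linarith
  have hBle : B.card ≤ I.card - 1 := by
    rcases (by omega : I.card = 1 ∨ I.card = 2) with h | h
    · rw [hBempty h, h]; simp
    · rw [h]; omega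
  -- inclusion
  have hsub : Finset.univ.filter (fun i => ((⌊xb' i + 1/2⌋ : ℤ) : ℝ) ≠ xs i) ⊆
      ((Finset.univ.filter (fun i => xt i ≠ xs i)) \ I) ∪ B := by
    intro i hi
    rw [Finset.mem_filter] at hi
    by_cases hiB : i ∈ B
    · exact Finset.mem_union_right _ hiB
    · have hiz : ((⌊xb' i + 1/2⌋ : ℤ) : ℝ) = z i := by
        rw [hB, Finset.mem_filter] at hiB
        push_neg at hiB
        exact hiB (Finset.mem_univ i)
      have hzi : z i ≠ xs i := by rw [← hiz]; exact hi.2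
      apply Finset.mem_union_left
      rw [Finset.mem_sdiff, Finset.mem_filter]
      by_cases hiI : i ∈ I
      · exfalso
        have hzz : z i = 1 - xt i := by simp [hz, hiI]
        have hd := hIdiff i hiI
        rw [hzz] at hzi
        rcases hxt i with h | h <;> rcases hxs i with h' | h' <;> rw [h, h'] at hzi hd
        · exact hd rfl
        · exact hzi (by norm_num)
        · exact hzi (by norm_num)
        · exact hd rfl
      · have hzz : z i = xt i := by simp [hz, hiI]
        exact ⟨⟨Finset.mem_univ i, by rw [← hzz]; exact hzi⟩, hiI⟩
  have hIsubf : I ⊆ Finset.univ.filter (fun i => xt i ≠ xs i) :=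
    fun i hi => Finset.mem_filter.mpr ⟨Finset.mem_univ i, hIdiff i hi⟩
  have hdI : I.card ≤ (Finset.univ.filter (fun i => xt i ≠ xs i)).card :=
    Finset.card_le_card hIsubf
  calc (Finset.univ.filter (fun i => ((⌊xb' i + 1/2⌋ : ℤ) : ℝ) ≠ xs i)).card
      ≤ (((Finset.univ.filter (fun i => xt i ≠ xs i)) \ I) ∪ B).card :=
        Finset.card_le_card hsub
    _ ≤ ((Finset.univ.filter (fun i => xt i ≠ xs i)) \ I).card + B.card :=
        Finset.card_union_le _ _
    _ = ((Finset.univ.filter (fun i => xt i ≠ xs i)).card - I.card) + B.card := by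
        rw [Finset.card_sdiff_of_subset hIsubf]
    _ ≤ (Finset.univ.filter (fun i => xt i ≠ xs i)).card - 1 := by omega

private lemma dist_single {n : ℕ} (w y : Fin n → ℝ) (g : Fin n)
    (h : ∀ i, i ≠ g → w i = y i) : ∑ i, |w i - y i| = |w g - y g| := by
  rw [← Finset.sum_subset (Finset.subset_univ ({g} : Finset (Fin n)))
    (fun i _ hi => by rw [h i (by simpa using hi), sub_self, abs_zero]),
    Finset.sum_singleton]

set_option maxHeartbeats 2000000 in
/-- Two-flip lemma: for a feasible subset-sum polytope, a feasible 0/1 point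
`x*`, and an infeasible stalling 0/1 point `x̃`, there is a set `I` of at most
2 coordinates such that `AltProj*(flip(x̃, I))` is strictly closer to `x*` in
Hamming distance. -/
theorem two_flip_lemma (n : ℕ) (a : Fin n → ℝ) (b : ℝ) (ha : ∀ i, 0 < a i)
    (P : Set (Fin n → ℝ))
    (hP : P = {x | (∀ i, 0 ≤ x i ∧ x i ≤ 1) ∧ ∑ i, a i * x i = b})
    (xs : Fin n → ℝ) (hxs : ∀ i, xs i = 0 ∨ xs i = 1)
    (hxsfeas : ∑ i, a i * xs i = b)
    (xt : Fin n → ℝ) (hxt : ∀ i, xt i = 0 ∨ xt i = 1)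
    (hinfeas : ∑ i, a i * xt i ≠ b)
    (hstall : ∃ xb, xb ∈ Set.extremePoints ℝ P ∧
      (∀ x ∈ P, ∑ i, |xt i - xb i| ≤ ∑ i, |xt i - x i|) ∧
      ∀ i, ((⌊xb i + 1/2⌋ : ℤ) : ℝ) = xt i) :
    ∃ I : Finset (Fin n), I.card ≤ 2 ∧
      ∀ xb' : Fin n → ℝ, xb' ∈ Set.extremePoints ℝ P →
        (∀ x ∈ P, ∑ i, |(if i ∈ I then 1 - xt i else xt i) - xb' i| ≤
          ∑ i, |(if i ∈ I then 1 - xt i else xt i) - x i|) →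
        (Finset.univ.filter (fun i => ((⌊xb' i + 1/2⌋ : ℤ) : ℝ) ≠ xs i)).card ≤
          (Finset.univ.filter (fun i => xt i ≠ xs i)).card - 1 := by
  subst hP
  obtain ⟨xb, hxbext, hxbmin, hround⟩ := hstall
  obtain ⟨hxb01, hxbsum⟩ := hxbext.1
  have hri : ∀ v : ℝ, v = 0 ∨ v = 1 → ((⌊v + 1/2⌋ : ℤ) : ℝ) = v := by
    rintro v (rfl | rfl) <;> norm_num
  have hint : ∀ i, xb i = 0 ∨ xb i = 1 → xt i = xb i := by
    intro i hi
    have hr := hround i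
    rcases hi with h | h <;> rw [h] at hr ⊢ <;> rw [← hr]
    · exact hri 0 (Or.inl rfl)
    · exact hri 1 (Or.inr rfl)
  have hexf : ∃ f, xb f ≠ 0 ∧ xb f ≠ 1 := by
    by_contra hcon
    push_neg at hcon
    apply hinfeas
    rw [← hxbsum]
    refine Finset.sum_congr rfl fun i _ => ?_
    have h1 : xt i = xb i := by
      by_cases h0 : xb i = 0
      · exact hint i (Or.inl h0)
      · exact hint i (Or.inr (hcon i h0))
    rw [h1]
  obtain ⟨f, hf0, hf1⟩ := hexf
  have hfrac : ∀ i, xb i ≠ 0 → xb i ≠ 1 → i = f := fun i h0 h1 =>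
    frac_unique ha hxbext h0 h1 hf0 hf1
  have hoff : ∀ i, i ≠ f → xt i = xb i := by
    intro i hif
    by_cases h0 : xb i = 0
    · exact hint i (Or.inl h0)
    · by_cases h1 : xb i = 1
      · exact hint i (Or.inr h1)
      · exact absurd (hfrac i h0 h1) hif
  have hxbf0 : 0 ≤ xb f := (hxb01 f).1
  have hxbf1 : xb f ≤ 1 := (hxb01 f).2
  have hdelta : ∑ i, a i * xt i - b = a f * (xt f - xb f) := by
    have h1 : ∑ i, a i * xt i = ∑ i, a i * xb i +
        ∑ i ∈ ({f} : Finset (Fin n)), (a i * xt i - a i * xb i) := by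
      apply sum_shift
      intro i hi
      rw [hoff i (by simpa using hi)]
    rw [h1, Finset.sum_singleton, hxbsum]
    ring
  have hfb := hround f
  have hfloor : xt f - 1/2 ≤ xb f ∧ xb f < xt f + 1/2 := by
    rcases hxt f with h | h <;> rw [h] at hfb ⊢
    · have h2 : ⌊xb f + 1/2⌋ = 0 := by exact_mod_cast hfb
      rw [Int.floor_eq_zero_iff] at h2
      simp only [Set.mem_Ico] at h2
      constructor <;> linarith [h2.1, h2.2]
    · have h2 : ⌊xb f + 1/2⌋ = 1 := by exact_mod_cast hfb
      rw [Int.floor_eq_iff] at h2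
      push_cast at h2
      constructor <;> linarith [h2.1, h2.2]
  rcases lt_or_gt_of_ne hinfeas with hlt | hgt
  · -- undershoot : ∑ a xt < b
    have hxtf : xt f = 0 := by
      rcases hxt f with h | h
      · exact h
      · exfalso
        rw [h] at hdelta
        nlinarith [ha f, hxbf1]
    rw [hxtf] at hdelta hfloor
    set del : ℝ := b - ∑ i, a i * xt i with hdeldef
    have hdel : ∑ i, a i * xt i = b - del := by rw [hdeldef]; ring
    have hdelf : del = a f * xb f := by rw [hdeldef]; nlinarith [hdelta]
    have hdelpos : 0 < del := by rw [hdeldef]; linarith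
    have hdelub : del < a f / 2 := by
      have hb2 : xb f < 1/2 := by linarith [hfloor.2]
      have hb0 : 0 < xb f := by
        rcases eq_or_lt_of_le hxbf0 with h | h
        · exact absurd h.symm hf0
        · exact h
      rw [hdelf]
      nlinarith [ha f]
    have hexj : ∃ j, xt j = 0 ∧ xs j = 1 := by
      by_contra hcon
      push_neg at hcon
      have hle : ∀ i, xs i ≤ xt i := by
        intro i
        rcases hxt i with h | h <;> rcases hxs i with h' | h' <;> rw [h, h'] <;> try norm_num
        exact absurd h' (hcon i h)
      have hs : ∑ i, a i * xs i ≤ ∑ i, a i * xt i :=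
        Finset.sum_le_sum fun i _ => mul_le_mul_of_nonneg_left (hle i) (ha i).le
      rw [hxsfeas] at hs
      linarith
    obtain ⟨j, hjt, hjs⟩ := hexj
    rcases le_or_gt (a j) del with hA1 | hA1'
    · -- B1 : a j ≤ del, single flip at j, witness raises f
      have hjf : j ≠ f := by
        intro h
        rw [h] at hA1
        linarith [ha f]
      set s : ℝ := (del - a j) / a f with hsdef
      have hs0 : 0 ≤ s := div_nonneg (by linarith) (ha f).le
      have hslt : s < 1/2 := by
        rw [hsdef, div_lt_iff₀ (ha f)]
        nlinarith [ha j]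
      refine ⟨{j}, by simp, ?_⟩
      set y : Fin n → ℝ := fun i => if i = f then s else if i = j then 1 else xt i with hy
      have hyvals : ∀ i, i ≠ f → i ≠ j → y i = xt i := by
        intro i h1 h2; simp [hy, h1, h2]
      have hyf : y f = s := by simp [hy]
      have hyj : y j = 1 := by simp [hy, hjf]
      have hy01 : ∀ i, 0 ≤ y i ∧ y i ≤ 1 := by
        intro i
        by_cases h1 : i = f
        · subst h1; rw [hyf]; constructor <;> linarith
        · by_cases h2 : i = j
          · subst h2; rw [hyj]; norm_num
          · rw [hyvals i h1 h2]; rcases hxt i with h | h <;> rw [h] <;> norm_num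
      have hyfeas : ∑ i, a i * y i = b := by
        have h1 : ∑ i, a i * y i = ∑ i, a i * xt i +
            ∑ i ∈ ({f, j} : Finset (Fin n)), (a i * y i - a i * xt i) := by
          apply sum_shift
          intro i hi
          simp only [Finset.mem_insert, Finset.mem_singleton] at hi
          push_neg at hi
          rw [hyvals i hi.1 hi.2]
        rw [h1, Finset.sum_pair (Ne.symm hjf), hyf, hyj, hxtf, hjt, hdel, hsdef]
        have haf := (ha f).ne'
        field_simp
        ring
      have hdist : ∑ i, |(if i ∈ ({j} : Finset (Fin n)) then 1 - xt i else xt i) - y i| = s := by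
        have h1 : ∀ i, i ≠ f →
            (if i ∈ ({j} : Finset (Fin n)) then 1 - xt i else xt i) = y i := by
          intro i hif
          by_cases h2 : i = j
          · subst h2; rw [hyj]; simp [hjt]
          · simp only [Finset.mem_singleton, h2, if_false]
            rw [hyvals i hif h2]
        rw [dist_single _ y f h1]
        rw [hyf]
        simp only [Finset.mem_singleton, Ne.symm hjf, if_false, hxtf]
        rw [show (0:ℝ) - s = -s by ring, abs_neg, abs_of_nonneg hs0]
      refine endgame ha hxs hxt {j} (Finset.singleton_nonempty j) (by simp) ?_ y hy01 hyfeas ?_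
      · intro i hi
        rw [Finset.mem_singleton] at hi
        subst hi
        rw [hjt, hjs]
        norm_num
      · rw [hdist, Finset.card_singleton]
        push_cast
        linarith
    · rcases lt_or_ge (a j) (2 * del) with hA2 | hA3
      · -- B2 : del < a j < 2 del, single flip at j, witness partially raises j
        refine ⟨{j}, by simp, ?_⟩
        set y : Fin n → ℝ := fun i => if i = j then del / a j else xt i with hy
        have hyj : y j = del / a j := by simp [hy]
        have hyvals : ∀ i, i ≠ j → y i = xt i := by intro i h2; simp [hy, h2]
        have hdja : del / a j < 1 := by rw [div_lt_one (ha j)]; linarith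
        have hdja2 : 1/2 < del / a j := by
          rw [lt_div_iff₀ (ha j)]
          linarith
        have hy01 : ∀ i, 0 ≤ y i ∧ y i ≤ 1 := by
          intro i
          by_cases h2 : i = j
          · subst h2; rw [hyj]
            constructor
            · positivity
            · linarith
          · rw [hyvals i h2]; rcases hxt i with h | h <;> rw [h] <;> norm_num
        have hyfeas : ∑ i, a i * y i = b := by
          have h1 : ∑ i, a i * y i = ∑ i, a i * xt i +
              ∑ i ∈ ({j} : Finset (Fin n)), (a i * y i - a i * xt i) := by
            apply sum_shift
            intro i hi
            rw [hyvals i (by simpa using hi)]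
          rw [h1, Finset.sum_singleton, hyj, hjt, hdel]
          have haj := (ha j).ne'
          field_simp
          ring
        have hdist : ∑ i, |(if i ∈ ({j} : Finset (Fin n)) then 1 - xt i else xt i) - y i|
            = 1 - del / a j := by
          have h1 : ∀ i, i ≠ j →
              (if i ∈ ({j} : Finset (Fin n)) then 1 - xt i else xt i) = y i := by
            intro i h2
            simp only [Finset.mem_singleton, h2, if_false]
            rw [hyvals i h2]
          rw [dist_single _ y j h1, hyj]
          simp only [Finset.mem_singleton, if_true, hjt, if_pos rfl]
          rw [abs_of_nonneg (by linarith)]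
          norm_num
        refine endgame ha hxs hxt {j} (Finset.singleton_nonempty j) (by simp) ?_ y hy01 hyfeas ?_
        · intro i hi
          rw [Finset.mem_singleton] at hi
          subst hi
          rw [hjt, hjs]
          norm_num
        · rw [hdist, Finset.card_singleton]
          push_cast
          linarith
      · -- B3 : a j ≥ 2 del, two flips
        have hexj' : ∃ j', xt j' = 1 ∧ xs j' = 0 ∧ j' ≠ j := by
          by_contra hcon
          push_neg at hcon
          set gt : Fin n → ℝ := fun i => if i = j then 1 else xt i with hgt
          have hgtsum : ∑ i, a i * gt i = b - del + a j := by
            have h1 : ∑ i, a i * gt i = ∑ i, a i * xt i +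
                ∑ i ∈ ({j} : Finset (Fin n)), (a i * gt i - a i * xt i) := by
              apply sum_shift
              intro i hi
              simp [hgt, (by simpa using hi : i ≠ j)]
            rw [h1, Finset.sum_singleton, hdel]
            simp only [hgt, hjt, if_pos rfl]
            ring
          have hle : ∀ i, gt i ≤ xs i := by
            intro i
            by_cases h2 : i = j
            · subst h2
              have hg1 : gt i = 1 := by simp [hgt]
              rw [hg1, hjs]
            · have hg : gt i = xt i := by simp [hgt, h2]
              rw [hg]
              rcases hxt i with h | h <;> rcases hxs i with h' | h' <;> rw [h, h'] <;> try norm_num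
              exact absurd (hcon i h h') h2
          have hss : ∑ i, a i * gt i ≤ ∑ i, a i * xs i :=
            Finset.sum_le_sum fun i _ => mul_le_mul_of_nonneg_left (hle i) (ha i).le
          rw [hxsfeas, hgtsum] at hss
          linarith
        obtain ⟨j', hjt', hjs', hjj'⟩ := hexj'
        have hIcard : ({j, j'} : Finset (Fin n)).card = 2 := by
          rw [Finset.card_insert_of_notMem (Finset.notMem_singleton.mpr (Ne.symm hjj')), Finset.card_singleton]
        rcases le_or_gt 0 (a j - a j' - del) with hr | hr
        · -- lower j partially
          set q : ℝ := (a j - a j' - del) / a j with hq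
          have hq0 : 0 ≤ q := div_nonneg hr (ha j).le
          have hq1 : q < 1 := by
            rw [hq, div_lt_one (ha j)]
            linarith [ha j', hdelpos]
          refine ⟨{j, j'}, by rw [hIcard], ?_⟩
          set y : Fin n → ℝ := fun i => if i = j then 1 - q else if i = j' then 0 else xt i with hy
          have hyj : y j = 1 - q := by simp [hy]
          have hyj' : y j' = 0 := by simp [hy, hjj']
          have hyvals : ∀ i, i ≠ j → i ≠ j' → y i = xt i := by
            intro i h1 h2; simp [hy, h1, h2]
          have hy01 : ∀ i, 0 ≤ y i ∧ y i ≤ 1 := by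
            intro i
            by_cases h1 : i = j
            · subst h1; rw [hyj]; constructor <;> linarith
            · by_cases h2 : i = j'
              · subst h2; rw [hyj']; norm_num
              · rw [hyvals i h1 h2]; rcases hxt i with h | h <;> rw [h] <;> norm_num
          have hyfeas : ∑ i, a i * y i = b := by
            have h1 : ∑ i, a i * y i = ∑ i, a i * xt i +
                ∑ i ∈ ({j, j'} : Finset (Fin n)), (a i * y i - a i * xt i) := by
              apply sum_shift
              intro i hi
              simp only [Finset.mem_insert, Finset.mem_singleton] at hi
              push_neg at hi
              rw [hyvals i hi.1 hi.2]
            rw [h1, Finset.sum_pair hjj'.symm, hyj, hyj', hjt, hjt', hdel, hq]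
            have haj := (ha j).ne'
            field_simp
            ring
          have hdist : ∑ i, |(if i ∈ ({j, j'} : Finset (Fin n)) then 1 - xt i else xt i) - y i| = q := by
            have h1 : ∀ i, i ≠ j →
                (if i ∈ ({j, j'} : Finset (Fin n)) then 1 - xt i else xt i) = y i := by
              intro i hij
              by_cases h2 : i = j'
              · subst h2
                have hmem : i ∈ ({j, i} : Finset (Fin n)) := by simp
                rw [if_pos hmem, hjt', hyj']
                norm_num
              · have hnm : i ∉ ({j, j'} : Finset (Fin n)) := by simp [hij, h2]
                rw [if_neg hnm, hyvals i hij h2]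
            rw [dist_single _ y j h1]
            have hjmem : j ∈ ({j, j'} : Finset (Fin n)) := by simp
            rw [if_pos hjmem, hjt, hyj]
            have he : (1:ℝ) - 0 - (1 - q) = q := by ring
            rw [he]
            exact abs_of_nonneg hq0
          refine endgame ha hxs hxt {j, j'} ⟨j, by simp⟩ (by rw [hIcard]) ?_ y hy01 hyfeas ?_
          · intro i hi
            rcases Finset.mem_insert.mp hi with h | h
            · subst h; rw [hjt, hjs]; norm_num
            · rw [Finset.mem_singleton] at h; subst h; rw [hjt', hjs']; norm_num
          · rw [hdist, hIcard]
            push_cast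
            linarith
        · -- raise j' partially
          set q : ℝ := (del + a j' - a j) / a j' with hq
          have hq0 : 0 ≤ q := div_nonneg (by linarith) (ha j').le
          have hq1 : q < 1 := by
            rw [hq, div_lt_one (ha j')]
            linarith [hdelpos]
          refine ⟨{j, j'}, by rw [hIcard], ?_⟩
          set y : Fin n → ℝ := fun i => if i = j' then q else if i = j then 1 else xt i with hy
          have hyj' : y j' = q := by simp [hy]
          have hyj : y j = 1 := by simp [hy, hjj'.symm]
          have hyvals : ∀ i, i ≠ j → i ≠ j' → y i = xt i := by
            intro i h1 h2; simp [hy, h1, h2]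
          have hy01 : ∀ i, 0 ≤ y i ∧ y i ≤ 1 := by
            intro i
            by_cases h1 : i = j
            · subst h1; rw [hyj]; norm_num
            · by_cases h2 : i = j'
              · subst h2; rw [hyj']; constructor <;> linarith
              · rw [hyvals i h1 h2]; rcases hxt i with h | h <;> rw [h] <;> norm_num
          have hyfeas : ∑ i, a i * y i = b := by
            have h1 : ∑ i, a i * y i = ∑ i, a i * xt i +
                ∑ i ∈ ({j, j'} : Finset (Fin n)), (a i * y i - a i * xt i) := by
              apply sum_shift
              intro i hi
              simp only [Finset.mem_insert, Finset.mem_singleton] at hi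
              push_neg at hi
              rw [hyvals i hi.1 hi.2]
            rw [h1, Finset.sum_pair hjj'.symm, hyj, hyj', hjt, hjt', hdel, hq]
            have haj' := (ha j').ne'
            field_simp
            ring
          have hdist : ∑ i, |(if i ∈ ({j, j'} : Finset (Fin n)) then 1 - xt i else xt i) - y i| = q := by
            have h1 : ∀ i, i ≠ j' →
                (if i ∈ ({j, j'} : Finset (Fin n)) then 1 - xt i else xt i) = y i := by
              intro i hij
              by_cases h2 : i = j
              · subst h2
                have hmem : i ∈ ({i, j'} : Finset (Fin n)) := by simp
                rw [if_pos hmem, hjt, hyj]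
                norm_num
              · have hnm : i ∉ ({j, j'} : Finset (Fin n)) := by simp [hij, h2]
                rw [if_neg hnm, hyvals i h2 hij]
            rw [dist_single _ y j' h1]
            have hjmem : j' ∈ ({j, j'} : Finset (Fin n)) := by simp
            rw [if_pos hjmem, hjt', hyj']
            have he : |(1:ℝ) - 1 - q| = q := by
              rw [show (1:ℝ) - 1 - q = -q by ring, abs_neg]
              exact abs_of_nonneg hq0
            rw [he]
          refine endgame ha hxs hxt {j, j'} ⟨j, by simp⟩ (by rw [hIcard]) ?_ y hy01 hyfeas ?_
          · intro i hi
            rcases Finset.mem_insert.mp hi with h | h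
            · subst h; rw [hjt, hjs]; norm_num
            · rw [Finset.mem_singleton] at h; subst h; rw [hjt', hjs']; norm_num
          · rw [hdist, hIcard]
            push_cast
            linarith
  · -- overshoot : ∑ a xt > b
    have hxtf : xt f = 1 := by
      rcases hxt f with h | h
      · exfalso
        rw [h] at hdelta
        nlinarith [ha f, hxbf0]
      · exact h
    rw [hxtf] at hdelta hfloor
    set del : ℝ := ∑ i, a i * xt i - b with hdeldef
    have hdel : ∑ i, a i * xt i = b + del := by rw [hdeldef]; ring
    have hdelf : del = a f * (1 - xb f) := by rw [hdeldef]; nlinarith [hdelta]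
    have hdelpos : 0 < del := by rw [hdeldef]; linarith
    have hdelub : del ≤ a f / 2 := by
      have hb2 : 1 - 1/2 ≤ xb f := hfloor.1
      rw [hdelf]
      nlinarith [ha f]
    have hexj : ∃ j, xt j = 1 ∧ xs j = 0 := by
      by_contra hcon
      push_neg at hcon
      have hle : ∀ i, xt i ≤ xs i := by
        intro i
        rcases hxt i with h | h <;> rcases hxs i with h' | h' <;> rw [h, h'] <;> try norm_num
        exact absurd h' (hcon i h)
      have hs : ∑ i, a i * xt i ≤ ∑ i, a i * xs i :=
        Finset.sum_le_sum fun i _ => mul_le_mul_of_nonneg_left (hle i) (ha i).le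
      rw [hxsfeas] at hs
      linarith
    obtain ⟨j, hjt, hjs⟩ := hexj
    rcases le_or_gt (a j) del with hA1 | hA1'
    · -- A1 : a j ≤ del, single flip at j, witness lowers f
      have hjf : j ≠ f := by
        intro h
        rw [h] at hA1
        linarith [ha f]
      set s : ℝ := (del - a j) / a f with hsdef
      have hs0 : 0 ≤ s := div_nonneg (by linarith) (ha f).le
      have hslt : s < 1/2 := by
        rw [hsdef, div_lt_iff₀ (ha f)]
        nlinarith [ha j]
      refine ⟨{j}, by simp, ?_⟩
      set y : Fin n → ℝ := fun i => if i = f then 1 - s else if i = j then 0 else xt i with hy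
      have hyvals : ∀ i, i ≠ f → i ≠ j → y i = xt i := by
        intro i h1 h2; simp [hy, h1, h2]
      have hyf : y f = 1 - s := by simp [hy]
      have hyj : y j = 0 := by simp [hy, hjf]
      have hy01 : ∀ i, 0 ≤ y i ∧ y i ≤ 1 := by
        intro i
        by_cases h1 : i = f
        · subst h1; rw [hyf]; constructor <;> linarith
        · by_cases h2 : i = j
          · subst h2; rw [hyj]; norm_num
          · rw [hyvals i h1 h2]; rcases hxt i with h | h <;> rw [h] <;> norm_num
      have hyfeas : ∑ i, a i * y i = b := by
        have h1 : ∑ i, a i * y i = ∑ i, a i * xt i +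
            ∑ i ∈ ({f, j} : Finset (Fin n)), (a i * y i - a i * xt i) := by
          apply sum_shift
          intro i hi
          simp only [Finset.mem_insert, Finset.mem_singleton] at hi
          push_neg at hi
          rw [hyvals i hi.1 hi.2]
        rw [h1, Finset.sum_pair (Ne.symm hjf), hyf, hyj, hxtf, hjt, hdel, hsdef]
        have haf := (ha f).ne'
        field_simp
        ring
      have hdist : ∑ i, |(if i ∈ ({j} : Finset (Fin n)) then 1 - xt i else xt i) - y i| = s := by
        have h1 : ∀ i, i ≠ f →
            (if i ∈ ({j} : Finset (Fin n)) then 1 - xt i else xt i) = y i := by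
          intro i hif
          by_cases h2 : i = j
          · subst h2; rw [hyj]; simp [hjt]
          · simp only [Finset.mem_singleton, h2, if_false]
            rw [hyvals i hif h2]
        rw [dist_single _ y f h1, hyf]
        simp only [Finset.mem_singleton, Ne.symm hjf, if_false, hxtf]
        rw [show (1:ℝ) - (1 - s) = s by ring]
        exact abs_of_nonneg hs0
      refine endgame ha hxs hxt {j} (Finset.singleton_nonempty j) (by simp) ?_ y hy01 hyfeas ?_
      · intro i hi
        rw [Finset.mem_singleton] at hi
        subst hi
        rw [hjt, hjs]
        norm_num
      · rw [hdist, Finset.card_singleton]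
        push_cast
        linarith
    · rcases lt_or_ge (a j) (2 * del) with hA2 | hA3
      · -- A2 : del < a j < 2 del, single flip at j, witness partially lowers j
        refine ⟨{j}, by simp, ?_⟩
        set y : Fin n → ℝ := fun i => if i = j then 1 - del / a j else xt i with hy
        have hyj : y j = 1 - del / a j := by simp [hy]
        have hyvals : ∀ i, i ≠ j → y i = xt i := by intro i h2; simp [hy, h2]
        have hdja : del / a j < 1 := by rw [div_lt_one (ha j)]; linarith
        have hdja2 : 1/2 < del / a j := by
          rw [lt_div_iff₀ (ha j)]
          linarith
        have hy01 : ∀ i, 0 ≤ y i ∧ y i ≤ 1 := by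
          intro i
          by_cases h2 : i = j
          · subst h2; rw [hyj]
            constructor <;> linarith [hdja, hdja2]
          · rw [hyvals i h2]; rcases hxt i with h | h <;> rw [h] <;> norm_num
        have hyfeas : ∑ i, a i * y i = b := by
          have h1 : ∑ i, a i * y i = ∑ i, a i * xt i +
              ∑ i ∈ ({j} : Finset (Fin n)), (a i * y i - a i * xt i) := by
            apply sum_shift
            intro i hi
            rw [hyvals i (by simpa using hi)]
          rw [h1, Finset.sum_singleton, hyj, hjt, hdel]
          have haj := (ha j).ne'
          field_simp
          ring
        have hdist : ∑ i, |(if i ∈ ({j} : Finset (Fin n)) then 1 - xt i else xt i) - y i|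
            = 1 - del / a j := by
          have h1 : ∀ i, i ≠ j →
              (if i ∈ ({j} : Finset (Fin n)) then 1 - xt i else xt i) = y i := by
            intro i h2
            simp only [Finset.mem_singleton, h2, if_false]
            rw [hyvals i h2]
          rw [dist_single _ y j h1, hyj]
          simp only [Finset.mem_singleton, if_true, hjt, if_pos rfl]
          rw [show (1:ℝ) - 1 - (1 - del / a j) = -(1 - del / a j) by ring, abs_neg]
          exact abs_of_nonneg (by linarith)
        refine endgame ha hxs hxt {j} (Finset.singleton_nonempty j) (by simp) ?_ y hy01 hyfeas ?_
        · intro i hi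
          rw [Finset.mem_singleton] at hi
          subst hi
          rw [hjt, hjs]
          norm_num
        · rw [hdist, Finset.card_singleton]
          push_cast
          linarith
      · -- A3 : a j ≥ 2 del, two flips
        have hexj' : ∃ j', xt j' = 0 ∧ xs j' = 1 ∧ j' ≠ j := by
          by_contra hcon
          push_neg at hcon
          set gt : Fin n → ℝ := fun i => if i = j then 0 else xt i with hgt
          have hgtsum : ∑ i, a i * gt i = b + del - a j := by
            have h1 : ∑ i, a i * gt i = ∑ i, a i * xt i +
                ∑ i ∈ ({j} : Finset (Fin n)), (a i * gt i - a i * xt i) := by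
              apply sum_shift
              intro i hi
              simp [hgt, (by simpa using hi : i ≠ j)]
            rw [h1, Finset.sum_singleton, hdel]
            simp only [hgt, hjt, if_pos rfl]
            ring
          have hle : ∀ i, xs i ≤ gt i := by
            intro i
            by_cases h2 : i = j
            · subst h2
              have hg1 : gt i = 0 := by simp [hgt]
              rw [hg1, hjs]
            · have hg : gt i = xt i := by simp [hgt, h2]
              rw [hg]
              rcases hxt i with h | h <;> rcases hxs i with h' | h' <;> rw [h, h'] <;> try norm_num
              exact absurd (hcon i h h') h2
          have hss : ∑ i, a i * xs i ≤ ∑ i, a i * gt i :=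
            Finset.sum_le_sum fun i _ => mul_le_mul_of_nonneg_left (hle i) (ha i).le
          rw [hxsfeas, hgtsum] at hss
          linarith
        obtain ⟨j', hjt', hjs', hjj'⟩ := hexj'
        have hIcard : ({j, j'} : Finset (Fin n)).card = 2 := by
          rw [Finset.card_insert_of_notMem (Finset.notMem_singleton.mpr (Ne.symm hjj')), Finset.card_singleton]
        rcases le_or_gt 0 (del - a j + a j') with hr | hr
        · -- lower j' partially
          set q : ℝ := (del - a j + a j') / a j' with hq
          have hq0 : 0 ≤ q := div_nonneg hr (ha j').le
          have hq1 : q < 1 := by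
            rw [hq, div_lt_one (ha j')]
            linarith [hdelpos]
          refine ⟨{j, j'}, by rw [hIcard], ?_⟩
          set y : Fin n → ℝ := fun i => if i = j' then 1 - q else if i = j then 0 else xt i with hy
          have hyj' : y j' = 1 - q := by simp [hy]
          have hyj : y j = 0 := by simp [hy, hjj'.symm]
          have hyvals : ∀ i, i ≠ j → i ≠ j' → y i = xt i := by
            intro i h1 h2; simp [hy, h1, h2]
          have hy01 : ∀ i, 0 ≤ y i ∧ y i ≤ 1 := by
            intro i
            by_cases h1 : i = j
            · subst h1; rw [hyj]; norm_num
            · by_cases h2 : i = j'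
              · subst h2; rw [hyj']; constructor <;> linarith
              · rw [hyvals i h1 h2]; rcases hxt i with h | h <;> rw [h] <;> norm_num
          have hyfeas : ∑ i, a i * y i = b := by
            have h1 : ∑ i, a i * y i = ∑ i, a i * xt i +
                ∑ i ∈ ({j, j'} : Finset (Fin n)), (a i * y i - a i * xt i) := by
              apply sum_shift
              intro i hi
              simp only [Finset.mem_insert, Finset.mem_singleton] at hi
              push_neg at hi
              rw [hyvals i hi.1 hi.2]
            rw [h1, Finset.sum_pair hjj'.symm, hyj, hyj', hjt, hjt', hdel, hq]
            have haj' := (ha j').ne'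
            field_simp
            ring
          have hdist : ∑ i, |(if i ∈ ({j, j'} : Finset (Fin n)) then 1 - xt i else xt i) - y i| = q := by
            have h1 : ∀ i, i ≠ j' →
                (if i ∈ ({j, j'} : Finset (Fin n)) then 1 - xt i else xt i) = y i := by
              intro i hij
              by_cases h2 : i = j
              · subst h2
                have hmem : i ∈ ({i, j'} : Finset (Fin n)) := by simp
                rw [if_pos hmem, hjt, hyj]
                norm_num
              · have hnm : i ∉ ({j, j'} : Finset (Fin n)) := by simp [hij, h2]
                rw [if_neg hnm, hyvals i h2 hij]
            rw [dist_single _ y j' h1]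
            have hjmem : j' ∈ ({j, j'} : Finset (Fin n)) := by simp
            rw [if_pos hjmem, hjt', hyj']
            have he : (1:ℝ) - 0 - (1 - q) = q := by ring
            rw [he]
            exact abs_of_nonneg hq0
          refine endgame ha hxs hxt {j, j'} ⟨j, by simp⟩ (by rw [hIcard]) ?_ y hy01 hyfeas ?_
          · intro i hi
            rcases Finset.mem_insert.mp hi with h | h
            · subst h; rw [hjt, hjs]; norm_num
            · rw [Finset.mem_singleton] at h; subst h; rw [hjt', hjs']; norm_num
          · rw [hdist, hIcard]
            push_cast
            linarith
        · -- raise j partially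
          set q : ℝ := (a j - del - a j') / a j with hq
          have hq0 : 0 ≤ q := div_nonneg (by linarith) (ha j).le
          have hq1 : q < 1 := by
            rw [hq, div_lt_one (ha j)]
            linarith [hdelpos, ha j']
          refine ⟨{j, j'}, by rw [hIcard], ?_⟩
          set y : Fin n → ℝ := fun i => if i = j then q else if i = j' then 1 else xt i with hy
          have hyj : y j = q := by simp [hy]
          have hyj' : y j' = 1 := by simp [hy, hjj']
          have hyvals : ∀ i, i ≠ j → i ≠ j' → y i = xt i := by
            intro i h1 h2; simp [hy, h1, h2]
          have hy01 : ∀ i, 0 ≤ y i ∧ y i ≤ 1 := by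
            intro i
            by_cases h1 : i = j
            · subst h1; rw [hyj]; constructor <;> linarith
            · by_cases h2 : i = j'
              · subst h2; rw [hyj']; norm_num
              · rw [hyvals i h1 h2]; rcases hxt i with h | h <;> rw [h] <;> norm_num
          have hyfeas : ∑ i, a i * y i = b := by
            have h1 : ∑ i, a i * y i = ∑ i, a i * xt i +
                ∑ i ∈ ({j, j'} : Finset (Fin n)), (a i * y i - a i * xt i) := by
              apply sum_shift
              intro i hi
              simp only [Finset.mem_insert, Finset.mem_singleton] at hi
              push_neg at hi
              rw [hyvals i hi.1 hi.2]
            rw [h1, Finset.sum_pair hjj'.symm, hyj, hyj', hjt, hjt', hdel, hq]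
            have haj := (ha j).ne'
            field_simp
            ring
          have hdist : ∑ i, |(if i ∈ ({j, j'} : Finset (Fin n)) then 1 - xt i else xt i) - y i| = q := by
            have h1 : ∀ i, i ≠ j →
                (if i ∈ ({j, j'} : Finset (Fin n)) then 1 - xt i else xt i) = y i := by
              intro i hij
              by_cases h2 : i = j'
              · subst h2
                have hmem : i ∈ ({j, i} : Finset (Fin n)) := by simp
                rw [if_pos hmem, hjt', hyj']
                norm_num
              · have hnm : i ∉ ({j, j'} : Finset (Fin n)) := by simp [hij, h2]
                rw [if_neg hnm, hyvals i hij h2]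
            rw [dist_single _ y j h1]
            have hjmem : j ∈ ({j, j'} : Finset (Fin n)) := by simp
            rw [if_pos hjmem, hjt, hyj]
            have he : |(1:ℝ) - 1 - q| = q := by
              rw [show (1:ℝ) - 1 - q = -q by ring, abs_neg]
              exact abs_of_nonneg hq0
            rw [he]
          refine endgame ha hxs hxt {j, j'} ⟨j, by simp⟩ (by rw [hIcard]) ?_ y hy01 hyfeas ?_
          · intro i hi
            rcases Finset.mem_insert.mp hi with h | h
            · subst h; rw [hjt, hjs]; norm_num
            · rw [Finset.mem_singleton] at h; subst h; rw [hjt', hjs']; norm_num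
          · rw [hdist, hIcard]
            push_cast
            linarith
end

section
/- In Case 1 of the two-point flip lemma for subset-sum: let P = {x ∈ [0,1]^n : a·x = b} with aᵢ > 0, let x* ∈ {0,1}^n satisfy a·x* = b, and let x̃ ∈ {0,1}^n be a stalling point with supp(x̃) ⊊ supp(x*). Then for any j ∈ supp(x*) \ supp(x̃), the flipped point z = flip(x̃, {j}) satisfies AltProj(z) = z and ‖z − x*‖₀ = ‖x̃ − x*‖₀ − 1. -/
/-- An extreme point of the polytope `{x ∈ [0,1]^n : a·x = b}` (with positive `a`)
cannot have two distinct strictly fractional coordinates. -/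
lemma extreme_no_two_frac {n : ℕ} (a : Fin n → ℝ) (b : ℝ) (ha : ∀ i, 0 < a i)
    (xb : Fin n → ℝ)
    (hxb : xb ∈ Set.extremePoints ℝ
      {x : Fin n → ℝ | (∀ i, 0 ≤ x i ∧ x i ≤ 1) ∧ ∑ i, a i * x i = b})
    (p q : Fin n) (hpq : p ≠ q)
    (hp0 : 0 < xb p) (hp1 : xb p < 1) (hq0 : 0 < xb q) (hq1 : xb q < 1) : False := by
  set ε : ℝ := min (min (xb p) (1 - xb p) / a q) (min (xb q) (1 - xb q) / a p) with hε
  have hεpos : 0 < ε := by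
    apply lt_min
    · exact div_pos (lt_min hp0 (by linarith)) (ha q)
    · exact div_pos (lt_min hq0 (by linarith)) (ha p)
  have hεq : ε * a q ≤ min (xb p) (1 - xb p) := by
    rw [← le_div_iff₀ (ha q)]
    exact min_le_left _ _
  have hεp : ε * a p ≤ min (xb q) (1 - xb q) := by
    rw [← le_div_iff₀ (ha p)]
    exact min_le_right _ _
  set v : Fin n → ℝ := fun i => if i = p then ε * a q else if i = q then -(ε * a p) else 0
    with hv
  have hvsum : ∑ i, a i * v i = 0 := by
    have hterm : ∀ i, a i * v i =
        (if i = p then a p * (ε * a q) else 0) + (if i = q then a q * (-(ε * a p)) else 0) := by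
      intro i
      by_cases h1 : i = p
      · subst h1; simp [hv, if_neg hpq]
      · by_cases h2 : i = q
        · subst h2; simp [hv, h1]
        · simp [hv, h1, h2]
    rw [Finset.sum_congr rfl (fun i _ => hterm i), Finset.sum_add_distrib]
    simp [Finset.sum_ite_eq']
    ring
  obtain ⟨⟨hbnd, hsum⟩, hext⟩ := hxb
  set x₁ : Fin n → ℝ := fun i => xb i - v i with hx₁
  set x₂ : Fin n → ℝ := fun i => xb i + v i with hx₂
  have hvb : ∀ i, 0 ≤ xb i - v i ∧ xb i - v i ≤ 1 ∧ 0 ≤ xb i + v i ∧ xb i + v i ≤ 1 := by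
    intro i
    by_cases h1 : i = p
    · rw [h1]
      have h2 := min_le_left (xb p) (1 - xb p)
      have h3 := min_le_right (xb p) (1 - xb p)
      have h4 : (0:ℝ) < ε * a q := mul_pos hεpos (ha q)
      have hvp : v p = ε * a q := by simp [hv]
      rw [hvp]
      refine ⟨by linarith, by linarith, by linarith, by linarith⟩
    · by_cases h2 : i = q
      · rw [h2]
        have h3 := min_le_left (xb q) (1 - xb q)
        have h4 := min_le_right (xb q) (1 - xb q)
        have h5 : (0:ℝ) < ε * a p := mul_pos hεpos (ha p)
        have hvq : v q = -(ε * a p) := by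
          simp [hv, Ne.symm hpq]
        rw [hvq]
        refine ⟨by linarith, by linarith, by linarith, by linarith⟩
      · have := hbnd i
        have hv0 : v i = 0 := by simp only [hv]; rw [if_neg h1, if_neg h2]
        rw [hv0]
        refine ⟨by linarith [this.1], by linarith [this.2], by linarith [this.1],
          by linarith [this.2]⟩
  have hx₁P : x₁ ∈ {x : Fin n → ℝ | (∀ i, 0 ≤ x i ∧ x i ≤ 1) ∧ ∑ i, a i * x i = b} := by
    refine ⟨fun i => ⟨(hvb i).1, (hvb i).2.1⟩, ?_⟩
    have : ∑ i, a i * (xb i - v i) = ∑ i, a i * xb i - ∑ i, a i * v i := by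
      rw [← Finset.sum_sub_distrib]; apply Finset.sum_congr rfl; intro i _; ring
    simp only [hx₁]; rw [this, hvsum, hsum]; ring
  have hx₂P : x₂ ∈ {x : Fin n → ℝ | (∀ i, 0 ≤ x i ∧ x i ≤ 1) ∧ ∑ i, a i * x i = b} := by
    refine ⟨fun i => ⟨(hvb i).2.2.1, (hvb i).2.2.2⟩, ?_⟩
    have : ∑ i, a i * (xb i + v i) = ∑ i, a i * xb i + ∑ i, a i * v i := by
      rw [← Finset.sum_add_distrib]; apply Finset.sum_congr rfl; intro i _; ring
    simp only [hx₂]; rw [this, hvsum, hsum]; ring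
  have hmem : xb ∈ openSegment ℝ x₁ x₂ := by
    refine ⟨1/2, 1/2, by norm_num, by norm_num, by norm_num, ?_⟩
    funext i
    simp only [hx₁, hx₂, Pi.smul_apply, Pi.add_apply, smul_eq_mul]
    ring
  have h := hext hx₁P hx₂P hmem
  have hthis : xb p - ε * a q = xb p := by
    have h5 : x₁ p = xb p := congrFun h p
    have hvp : v p = ε * a q := by simp [hv]
    rw [hx₁] at h5
    simp only at h5
    rw [hvp] at h5
    exact h5
  have h4 : (0:ℝ) < ε * a q := mul_pos hεpos (ha q)
  linarith

/-- Case 1 of the two-flip lemma: if `supp(x̃) ⊊ supp(x*)` and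
`j ∈ supp(x*) \ supp(x̃)`, then `z = flip(x̃, {j})` is itself a fixed point of
`AltProj` and is exactly one unit closer to `x*` in Hamming distance. -/
theorem two_flip_case_one (n : ℕ) (a : Fin n → ℝ) (b : ℝ) (ha : ∀ i, 0 < a i)
    (P : Set (Fin n → ℝ))
    (hP : P = {x | (∀ i, 0 ≤ x i ∧ x i ≤ 1) ∧ ∑ i, a i * x i = b})
    (xs : Fin n → ℝ) (hxs : ∀ i, xs i = 0 ∨ xs i = 1)
    (hxsfeas : ∑ i, a i * xs i = b)
    (xt : Fin n → ℝ) (hxt : ∀ i, xt i = 0 ∨ xt i = 1)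
    (hstall : ∃ xb, xb ∈ Set.extremePoints ℝ P ∧
      (∀ x ∈ P, ∑ i, |xt i - xb i| ≤ ∑ i, |xt i - x i|) ∧
      ∀ i, ((⌊xb i + 1/2⌋ : ℤ) : ℝ) = xt i)
    (hsupp : {i | xt i ≠ 0} ⊂ {i | xs i ≠ 0})
    (j : Fin n) (hj1 : xs j ≠ 0) (hj2 : xt j = 0)
    (z : Fin n → ℝ) (hzdef : ∀ i, z i = if i = j then 1 - xt i else xt i) :
    (∀ xb' : Fin n → ℝ, xb' ∈ Set.extremePoints ℝ P →
      (∀ x ∈ P, ∑ i, |z i - xb' i| ≤ ∑ i, |z i - x i|) →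
      ∀ i, ((⌊xb' i + 1/2⌋ : ℤ) : ℝ) = z i) ∧
    (Finset.univ.filter (fun i => z i ≠ xs i)).card =
      (Finset.univ.filter (fun i => xt i ≠ xs i)).card - 1 := by
  obtain ⟨xb, hxbext, hxbmin, hxbround⟩ := hstall
  -- basic facts
  have hxsj : xs j = 1 := (hxs j).resolve_left hj1
  have hzj : z j = 1 := by rw [hzdef j, if_pos rfl, hj2]; ring
  have hzi : ∀ i, i ≠ j → z i = xt i := fun i hi => by rw [hzdef i, if_neg hi]
  have hle : ∀ i, xt i ≤ xs i := by
    intro i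
    rcases hxt i with h | h
    · rcases hxs i with h' | h' <;> rw [h, h'] <;> norm_num
    · have : xs i ≠ 0 := hsupp.1 (by simp [h])
      rw [h, (hxs i).resolve_left this]
  -- B = b - a·xt ≥ a j > 0
  set B : ℝ := b - ∑ i, a i * xt i with hB
  have hBsum : B = ∑ i, (a i * xs i - a i * xt i) := by
    rw [hB, ← hxsfeas, Finset.sum_sub_distrib]
  have hBj : a j ≤ B := by
    rw [hBsum]
    have : a j * xs j - a j * xt j = a j := by rw [hxsj, hj2]; ring
    calc a j = a j * xs j - a j * xt j := this.symm
      _ ≤ ∑ i, (a i * xs i - a i * xt i) := by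
          apply Finset.single_le_sum (f := fun i => a i * xs i - a i * xt i)
          · intro i _
            have := (ha i).le
            nlinarith [hle i, ha i]
          · exact Finset.mem_univ j
  have hBpos : 0 < B := lt_of_lt_of_le (ha j) hBj
  -- xb facts
  have hxbP : xb ∈ P := hxbext.1
  rw [hP] at hxbP
  obtain ⟨hxbbnd, hxbsum⟩ := hxbP
  -- rounding facts about xb
  have hxbhalf : ∀ i, xt i = 0 → xb i < 1/2 := by
    intro i h0
    have hr := hxbround i
    rw [h0] at hr
    have hfl : ⌊xb i + 1/2⌋ = (0 : ℤ) := by exact_mod_cast hr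
    have := (Int.floor_eq_iff).mp hfl
    push_cast at this
    linarith [this.2]
  have hxbeq : ∀ i, xb i ≠ xt i → 0 < xb i ∧ xb i < 1 := by
    intro i hne
    rcases lt_or_eq_of_le (hxbbnd i).1 with h0 | h0
    · rcases lt_or_eq_of_le (hxbbnd i).2 with h1 | h1
      · exact ⟨h0, h1⟩
      · exfalso
        apply hne
        have hr := hxbround i
        rw [h1] at hr ⊢
        have : ⌊(1:ℝ) + 1/2⌋ = (1 : ℤ) := by
          rw [Int.floor_eq_iff] <;> norm_num
        rw [this] at hr
        have hr' : (1:ℝ) = xt i := by exact_mod_cast hr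
        linarith
    · exfalso
      apply hne
      have hr := hxbround i
      rw [← h0] at hr ⊢
      norm_num at hr ⊢
      linarith [hr]
  -- at most one coordinate where xb differs from xt
  have huniq : ∀ p q, xb p ≠ xt p → xb q ≠ xt q → p = q := by
    intro p q hp hq
    by_contra hpq
    have hp' := hxbeq p hp
    have hq' := hxbeq q hq
    exact extreme_no_two_frac a b ha xb (hP ▸ hxbext) p q hpq hp'.1 hp'.2 hq'.1 hq'.2
  -- there is some coordinate where xb differs from xt (else B = 0)
  have hex : ∃ f, xb f ≠ xt f := by
    by_contra h
    push_neg at h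
    have : ∑ i, a i * xb i = ∑ i, a i * xt i :=
      Finset.sum_congr rfl fun i _ => by rw [h i]
    rw [hxbsum] at this
    rw [hB] at hBpos
    linarith
  obtain ⟨f, hf⟩ := hex
  have hfall : ∀ i, i ≠ f → xb i = xt i := by
    intro i hi
    by_contra h
    exact hi (huniq i f h hf)
  -- B = a f * (xb f - xt f)
  have hBf : B = a f * (xb f - xt f) := by
    have : ∑ i, (a i * xb i - a i * xt i) = a f * xb f - a f * xt f := by
      apply Finset.sum_eq_single_of_mem f (Finset.mem_univ f)
      intro i _ hi
      rw [hfall i hi]; ring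
    have h2 : ∑ i, (a i * xb i - a i * xt i) = B := by
      rw [Finset.sum_sub_distrib, hxbsum, hB]
    rw [← h2, this]; ring
  -- xt f = 0 and B = a f * xb f < a f / 2
  have hxtf : xt f = 0 := by
    rcases hxt f with h | h
    · exact h
    · exfalso
      rw [h] at hBf
      nlinarith [(hxbbnd f).2, ha f, hBpos]
  have hBf' : B = a f * xb f := by rw [hBf, hxtf]; ring
  have hxbfhalf : xb f < 1/2 := hxbhalf f hxtf
  have hBhalf : B < a f / 2 := by nlinarith [ha f]
  have hfj : f ≠ j := by
    intro h
    rw [h] at hBhalf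
    linarith
  have hzf : z f = 0 := by rw [hzi f hfj, hxtf]
  -- z is binary
  have hz01 : ∀ i, z i = 0 ∨ z i = 1 := by
    intro i
    by_cases hij : i = j
    · right; rw [hij, hzj]
    · rw [hzi i hij]; exact hxt i
  -- sum over z
  have hzsum : ∑ i, a i * z i = (∑ i, a i * xt i) + a j := by
    have : ∑ i, (a i * z i - a i * xt i) = a j * z j - a j * xt j := by
      apply Finset.sum_eq_single_of_mem j (Finset.mem_univ j)
      intro i _ hi
      rw [hzi i hi]; ring
    rw [hzj, hj2] at this
    have h2 : ∑ i, (a i * z i - a i * xt i) = ∑ i, a i * z i - ∑ i, a i * xt i :=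
      Finset.sum_sub_distrib _ _
    rw [h2] at this
    linarith
  -- the competitor point y
  set gA : ℝ := (B - a j) / a f with hgA
  have hgA0 : 0 ≤ gA := div_nonneg (by linarith) (ha f).le
  have hgAhalf : gA < 1/2 := by
    rw [hgA, div_lt_iff₀ (ha f)]
    nlinarith [ha j]
  set y : Fin n → ℝ := fun i => if i = f then gA else z i with hy
  have hyP : y ∈ P := by
    rw [hP]
    constructor
    · intro i
      by_cases hif : i = f
      · simp only [hy, if_pos hif]
        exact ⟨hgA0, by linarith⟩
      · simp only [hy, if_neg hif]
        rcases hz01 i with h | h <;> rw [h] <;> norm_num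
    · have hdiff : ∑ i, (a i * y i - a i * z i) = a f * y f - a f * z f := by
        apply Finset.sum_eq_single_of_mem f (Finset.mem_univ f)
        intro i _ hi
        simp only [hy, if_neg hi]
        ring
      have hyf : y f = gA := by simp [hy]
      rw [hyf, hzf, Finset.sum_sub_distrib, hzsum] at hdiff
      have : a f * gA = B - a j := by
        rw [hgA, mul_comm, div_mul_cancel₀ _ (ne_of_gt (ha f))]
      rw [this] at hdiff
      have : ∑ i, a i * y i = ∑ i, a i * xt i + a j + (B - a j - 0) := by linarith
      rw [this, hB]; ring
  have hydist : ∑ i, |z i - y i| = gA := by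
    have : ∑ i, |z i - y i| = |z f - y f| := by
      apply Finset.sum_eq_single_of_mem f (Finset.mem_univ f)
      intro i _ hi
      simp only [hy, if_neg hi]
      simp
    rw [this]
    simp only [hy, if_pos rfl, hzf]
    rw [abs_of_nonpos (by linarith)]
    ring
  constructor
  · -- first conjunct
    intro xb' hxb'ext hxb'min i
    have hxb'P := hxb'ext.1
    rw [hP] at hxb'P
    obtain ⟨hxb'bnd, _⟩ := hxb'P
    have hd : ∑ k, |z k - xb' k| < 1/2 := by
      calc ∑ k, |z k - xb' k| ≤ ∑ k, |z k - y k| := hxb'min y hyP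
        _ = gA := hydist
        _ < 1/2 := hgAhalf
    have hone : |z i - xb' i| < 1/2 := by
      calc |z i - xb' i| ≤ ∑ k, |z k - xb' k| :=
            Finset.single_le_sum (f := fun k => |z k - xb' k|)
              (fun k _ => abs_nonneg _) (Finset.mem_univ i)
        _ < 1/2 := hd
    rw [abs_lt] at hone
    rcases hz01 i with h | h
    · rw [h] at hone ⊢
      have : ⌊xb' i + 1/2⌋ = (0 : ℤ) := by
        rw [Int.floor_eq_iff] <;> push_cast <;> constructor <;>
          [linarith [(hxb'bnd i).1]; linarith [hone.1]]
      rw [this]; norm_num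
    · rw [h] at hone ⊢
      have : ⌊xb' i + 1/2⌋ = (1 : ℤ) := by
        rw [Int.floor_eq_iff] <;> push_cast <;> constructor <;>
          [linarith [hone.2]; linarith [(hxb'bnd i).2]]
      rw [this]; norm_num
  · -- second conjunct: Hamming distance drops by one
    have hset : (Finset.univ.filter (fun i => z i ≠ xs i)) =
        (Finset.univ.filter (fun i => xt i ≠ xs i)).erase j := by
      ext i
      simp only [Finset.mem_filter, Finset.mem_erase, Finset.mem_univ, true_and]
      constructor
      · intro h
        have hij : i ≠ j := by
          intro he
          rw [he, hzj, hxsj] at h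
          exact h rfl
        rw [hzi i hij] at h
        exact ⟨hij, h⟩
      · intro ⟨hij, h⟩
        rw [hzi i hij]
        exact h
    rw [hset]
    apply Finset.card_erase_of_mem
    simp only [Finset.mem_filter, Finset.mem_univ, true_and]
    rw [hj2, hxsj]
    norm_num
end

section
/- Consider the two-variable subset-sum feasibility problem {(x₁,x₂) ∈ {0,1}² : 3x₁ + x₂ = 3}, whose LP relaxation is {(x₁,x₂) ∈ [0,1]² : 3x₁ + x₂ = 3}. The point (2/3, 1) is the unique point of the LP relaxation minimizing ℓ1 distance to (1,1), and also the unique point minimizing ℓ1 distance to (0,1); moreover round((2/3, 1)) = (1,1), and (1,1) and (0,1) are both infeasible for the integer problem while (1,0) is the unique feasible integer solution. -/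
/-!
On the LP segment the equation gives `x₂ = 3 - 3x₁`, so `x₂ ≤ 1` forces `x₁ ≥ 2/3` and the ℓ1
distance from `(x₁, x₂)` to `(c, 1)` is `|c - x₁| + 3x₁ - 2`. As `|c - ·|` is 1-Lipschitz and the
linear part has slope 3, this is strictly increasing in `x₁`, so for every `c` the endpoint
`x₁ = 2/3`, i.e. `(2/3, 1)`, is the unique closest point.
-/

theorem strictMono_abs_sub_add_mul (c : ℝ) {k : ℝ} (hk : 1 < k) :
    StrictMono fun x : ℝ => |c - x| + k * x := by
  intro x y hxy
  have hlip : |c - x| - |c - y| ≤ y - x := by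
    simpa [abs_of_pos (sub_pos.2 hxy)] using abs_sub_abs_le_abs_sub (c - x) (c - y)
  have hslope : y - x < k * (y - x) := lt_mul_of_one_lt_left (sub_pos.2 hxy) hk
  dsimp only
  linarith

def subsetSumRelaxation : Set (ℝ × ℝ) :=
  {q | 0 ≤ q.1 ∧ q.1 ≤ 1 ∧ 0 ≤ q.2 ∧ q.2 ≤ 1 ∧ 3 * q.1 + q.2 = 3}

namespace subsetSumRelaxation

variable {q : ℝ × ℝ}

theorem mem_two_thirds_one : ((2/3, 1) : ℝ × ℝ) ∈ subsetSumRelaxation := by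
  norm_num [subsetSumRelaxation]

theorem two_thirds_lt_fst (hq : q ∈ subsetSumRelaxation) (hne : q ≠ (2/3, 1)) : 2/3 < q.1 := by
  obtain ⟨-, -, -, h₂, heq⟩ := hq
  refine lt_of_le_of_ne (by linarith) fun h₁ => hne (Prod.ext h₁.symm ?_)
  dsimp only
  linarith

theorem abs_one_sub_snd (hq : q ∈ subsetSumRelaxation) : |1 - q.2| = 3 * q.1 - 2 := by
  obtain ⟨-, -, -, h₂, heq⟩ := hq
  rw [abs_of_nonneg (by linarith)]
  linarith

theorem l1_dist_lt (c : ℝ) (hq : q ∈ subsetSumRelaxation) (hne : q ≠ (2/3, 1)) :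
    |c - 2/3| + |(1 : ℝ) - 1| < |c - q.1| + |1 - q.2| := by
  have h := strictMono_abs_sub_add_mul c (k := 3) (by norm_num) (two_thirds_lt_fst hq hne)
  rw [abs_one_sub_snd hq, sub_self, abs_zero]
  dsimp only at h
  linarith

theorem l1_dist_le (c : ℝ) (hq : q ∈ subsetSumRelaxation) :
    |c - 2/3| + |(1 : ℝ) - 1| ≤ |c - q.1| + |1 - q.2| := by
  rcases eq_or_ne q (2/3, 1) with rfl | hne
  · rfl
  · exact (l1_dist_lt c hq hne).le

end subsetSumRelaxation

theorem three_mul_add_eq_three_iff_of_binary {x₁ x₂ : ℝ} (h₁ : x₁ = 0 ∨ x₁ = 1)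
    (h₂ : x₂ = 0 ∨ x₂ = 1) : 3 * x₁ + x₂ = 3 ↔ x₁ = 1 ∧ x₂ = 0 := by
  rcases h₁ with rfl | rfl <;> rcases h₂ with rfl | rfl <;> norm_num

/-- For the subset-sum instance `{(x₁,x₂) ∈ {0,1}² : 3x₁ + x₂ = 3}`:
`(2/3, 1)` is the unique ℓ1-closest point of the LP relaxation to `(1,1)` and
to `(0,1)`, it rounds to `(1,1)`, and `(1,0)` is the unique feasible integer
solution (in particular `(1,1)` and `(0,1)` are infeasible). -/
theorem fp_stalls_example (P : Set (ℝ × ℝ))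
    (hP : P = {q : ℝ × ℝ | 0 ≤ q.1 ∧ q.1 ≤ 1 ∧ 0 ≤ q.2 ∧ q.2 ≤ 1 ∧
      3 * q.1 + q.2 = 3}) :
    ((2/3, 1) : ℝ × ℝ) ∈ P ∧
    (∀ q ∈ P, |(1 : ℝ) - 2/3| + |(1 : ℝ) - 1| ≤ |1 - q.1| + |1 - q.2|) ∧
    (∀ q ∈ P, q ≠ ((2/3, 1) : ℝ × ℝ) →
      |(1 : ℝ) - 2/3| + |(1 : ℝ) - 1| < |1 - q.1| + |1 - q.2|) ∧
    (∀ q ∈ P, |(0 : ℝ) - 2/3| + |(1 : ℝ) - 1| ≤ |0 - q.1| + |1 - q.2|) ∧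
    (∀ q ∈ P, q ≠ ((2/3, 1) : ℝ × ℝ) →
      |(0 : ℝ) - 2/3| + |(1 : ℝ) - 1| < |0 - q.1| + |1 - q.2|) ∧
    ((⌊(2/3 : ℝ) + 1/2⌋ : ℤ) = 1 ∧ (⌊(1 : ℝ) + 1/2⌋ : ℤ) = 1) ∧
    (∀ x1 x2 : ℝ, (x1 = 0 ∨ x1 = 1) → (x2 = 0 ∨ x2 = 1) →
      (3 * x1 + x2 = 3 ↔ x1 = 1 ∧ x2 = 0)) := by
  subst hP
  open subsetSumRelaxation in
  exact ⟨mem_two_thirds_one,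
    fun _ => l1_dist_le 1, fun _ => l1_dist_lt 1,
    fun _ => l1_dist_le 0, fun _ => l1_dist_lt 0,
    ⟨by norm_num [Int.floor_eq_iff], by norm_num [Int.floor_eq_iff]⟩,
    fun _ _ => three_mul_add_eq_three_iff_of_binary⟩
end
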